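/- arXiv:2601.13497 — 4 statements merged into one kernel-verified Lean document; each statement's English description precedes it below -/
import Mathlib

section
/- For partitions ρ ≤ λ with λ−ρ a horizontal strip, one has ψ_{λ/ρ}(t) = φ_{λ/ρ}(t) · b_ρ(t)/b_λ(t) in ℚ(t), where φ_{λ/ρ}(t) = ∏_{i∈I}(1 - t^{m_i(λ)}) with I the set of i such that the conjugate of λ−ρ has a column in position i but not in position i+1, ψ_{λ/ρ}(t) = ∏_{j∈J}(1 - t^{m_j(ρ)}) with J the set of j where the conjugate of λ−ρ has no column at j but a column at j+1, and b_μ(t) = ∏_{i≥1} ∏_{r=1}^{m_i(μ)}(1-t^r). -/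
/- STATEMENT 5: For partitions ρ ≤ λ with λ-ρ a horizontal strip,
   ψ_{λ/ρ}(t) = φ_{λ/ρ}(t) · b_ρ(t)/b_λ(t) in ℚ(t),
where, with σ'_i = λ'_i - ρ'_i ∈ {0,1},
  φ_{λ/ρ}(t) = ∏_{i : σ'_i=1, σ'_{i+1}=0} (1 - t^{m_i(λ)}),
  ψ_{λ/ρ}(t) = ∏_{j : σ'_j=0, σ'_{j+1}=1} (1 - t^{m_j(ρ)}),
  b_μ(t) = ∏_{i≥1} ∏_{r=1}^{m_i(μ)} (1-t^r).
Partitions are modeled as antitone, eventually-zero functions ℕ → ℕ; the conjugate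
is λ'_i = #{j : λ_j ≥ i} and m_i(μ) = #{j : μ_j = i} (for i ≥ 1 these are finite).
The products over i ≥ 1 are finite: all nontrivial factors have index ≤ λ_1 + 1. -/

noncomputable section

local notation "K" => RatFunc ℚ

noncomputable def tvar : K := RatFunc.X

/-- conjugate partition value λ'_i = #{j : λ_j ≥ i} (for i ≥ 1). -/
noncomputable def conjP (f : ℕ → ℕ) (i : ℕ) : ℕ := Set.ncard {j | i ≤ f j}

/-- multiplicity m_i(μ) = #{j : μ_j = i} (for i ≥ 1). -/
noncomputable def multP (f : ℕ → ℕ) (i : ℕ) : ℕ := Set.ncard {j | f j = i}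

/-- b_μ(t) = ∏_{i≥1} φ_{m_i(μ)}(t); all parts are ≤ μ_0. -/
noncomputable def bP (f : ℕ → ℕ) : K :=
  ∏ i ∈ Finset.Icc 1 (f 0), ∏ r ∈ Finset.Icc 1 (multP f i), (1 - tvar ^ r)

-- auxiliary lemmas

lemma conj_finite {f : ℕ → ℕ} {N : ℕ} (hN : ∀ n, N ≤ n → f n = 0) {i : ℕ}
    (hi : 1 ≤ i) : {j | i ≤ f j}.Finite := by
  apply (Set.finite_Iio N).subset
  intro j hj
  simp only [Set.mem_setOf_eq] at hj
  simp only [Set.mem_Iio]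
  by_contra h
  push_neg at h
  have := hN j h
  omega

lemma mult_add_conj {f : ℕ → ℕ} {N : ℕ} (hN : ∀ n, N ≤ n → f n = 0) {i : ℕ}
    (hi : 1 ≤ i) : multP f i + conjP f (i + 1) = conjP f i := by
  have h1 : {j | i ≤ f j} = {j | f j = i} ∪ {j | i + 1 ≤ f j} := by
    ext j; simp only [Set.mem_setOf_eq, Set.mem_union]; omega
  have hd : Disjoint {j | f j = i} {j | i + 1 ≤ f j} := by
    rw [Set.disjoint_left]; intro j h1 h2
    simp only [Set.mem_setOf_eq] at h1 h2; omega
  have hfa : {j | f j = i}.Finite := by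
    apply (conj_finite hN hi).subset
    intro j hj; simp only [Set.mem_setOf_eq] at *; omega
  have hfb : {j | i + 1 ≤ f j}.Finite := conj_finite hN (by omega)
  simp only [conjP, multP]
  rw [h1, Set.ncard_union_eq hd hfa hfb]

lemma conj_zero_of_gt {f : ℕ → ℕ} (hf : Antitone f) {i : ℕ} (h : f 0 < i) :
    conjP f i = 0 := by
  have : {j | i ≤ f j} = ∅ := by
    ext j; simp only [Set.mem_setOf_eq, Set.mem_empty_iff_false, iff_false]
    have := hf (Nat.zero_le j); omega
  rw [conjP, this, Set.ncard_empty]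

lemma mult_zero_of_gt {f : ℕ → ℕ} (hf : Antitone f) {i : ℕ} (h : f 0 < i) :
    multP f i = 0 := by
  have : {j | f j = i} = ∅ := by
    ext j; simp only [Set.mem_setOf_eq, Set.mem_empty_iff_false, iff_false]
    have := hf (Nat.zero_le j); omega
  rw [multP, this, Set.ncard_empty]

lemma one_sub_tpow_ne {r : ℕ} (hr : 1 ≤ r) : (1 - tvar ^ r) ≠ 0 := by
  have : (1 : K) - tvar ^ r = algebraMap (Polynomial ℚ) K (1 - Polynomial.X ^ r) := by
    simp only [map_sub, map_one, map_pow, RatFunc.algebraMap_X, tvar]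
  rw [this]
  apply RatFunc.algebraMap_ne_zero
  intro h
  have := congrArg (Polynomial.eval 0) h
  simp [Polynomial.eval_pow, zero_pow (by omega : r ≠ 0)] at this

lemma bP_ne_zero (f : ℕ → ℕ) : bP f ≠ 0 := by
  rw [bP]
  apply Finset.prod_ne_zero_iff.mpr
  intro i hi
  apply Finset.prod_ne_zero_iff.mpr
  intro r hr
  exact one_sub_tpow_ne (Finset.mem_Icc.mp hr).1

lemma bP_eq_prod {f : ℕ → ℕ} (hf : Antitone f) {M : ℕ} (hM : f 0 ≤ M) :
    bP f = ∏ i ∈ Finset.Icc 1 M, ∏ r ∈ Finset.Icc 1 (multP f i), (1 - tvar ^ r) := by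
  rw [bP]
  apply Finset.prod_subset
  · intro i hi
    simp only [Finset.mem_Icc] at *
    omega
  · intro i hi hni
    simp only [Finset.mem_Icc] at hi hni
    have : f 0 < i := by omega
    rw [mult_zero_of_gt hf this]
    simp

theorem psi_eq_phi_mul_b_ratio (ρ lam : ℕ → ℕ)
    (hρa : Antitone ρ) (hlama : Antitone lam)
    (hfin : ∃ Nb, ∀ n, Nb ≤ n → lam n = 0)
    (hle : ∀ i, ρ i ≤ lam i)
    (hstrip : ∀ i, 1 ≤ i → conjP lam i ≤ conjP ρ i + 1) :
    (∏ j ∈ Finset.Icc 1 (lam 0 + 1),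
        if conjP lam j = conjP ρ j ∧ conjP lam (j + 1) = conjP ρ (j + 1) + 1 then
          (1 - tvar ^ multP ρ j) else 1)
      = (∏ i ∈ Finset.Icc 1 (lam 0 + 1),
          if conjP lam i = conjP ρ i + 1 ∧ conjP lam (i + 1) = conjP ρ (i + 1) then
            (1 - tvar ^ multP lam i) else 1)
        * (bP ρ / bP lam) := by
  obtain ⟨N, hN⟩ := hfin
  have hNρ : ∀ n, N ≤ n → ρ n = 0 := fun n hn => by
    have := hle n; have := hN n hn; omega
  rw [mul_div_assoc' , eq_div_iff (bP_ne_zero lam)]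
  rw [bP_eq_prod hρa (by have := hle 0; omega : ρ 0 ≤ lam 0 + 1),
      bP_eq_prod hlama (by omega : lam 0 ≤ lam 0 + 1)]
  rw [← Finset.prod_mul_distrib, ← Finset.prod_mul_distrib]
  apply Finset.prod_congr rfl
  intro i hi
  have hi1 : 1 ≤ i := (Finset.mem_Icc.mp hi).1
  have hml : multP lam i + conjP lam (i + 1) = conjP lam i := mult_add_conj hN hi1
  have hmr : multP ρ i + conjP ρ (i + 1) = conjP ρ i := mult_add_conj hNρ hi1
  have hsub : ∀ k, 1 ≤ k → conjP ρ k ≤ conjP lam k := by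
    intro k hk
    apply Set.ncard_le_ncard _ (conj_finite hN hk)
    intro j hj
    simp only [Set.mem_setOf_eq] at *
    exact le_trans hj (hle j)
  have h1 : conjP ρ i ≤ conjP lam i := hsub i hi1
  have h2 : conjP lam i ≤ conjP ρ i + 1 := hstrip i hi1
  have h3 : conjP ρ (i+1) ≤ conjP lam (i+1) := hsub (i+1) (by omega)
  have h4 : conjP lam (i+1) ≤ conjP ρ (i+1) + 1 := hstrip (i+1) (by omega)
  set a := conjP lam i with ha
  set b := conjP ρ i with hb
  set a' := conjP lam (i+1) with ha'
  set b' := conjP ρ (i+1) with hb'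
  set ml := multP lam i
  set mr := multP ρ i
  clear_value a b a' b' ml mr
  have hca : a = b ∨ a = b + 1 := by omega
  have hca' : a' = b' ∨ a' = b' + 1 := by omega
  rcases hca with h | h <;> rcases hca' with h' | h'
  · have : ml = mr := by omega
    rw [if_neg (by omega), if_neg (by omega), this]
  · have : mr = ml + 1 := by omega
    rw [if_pos (by omega), if_neg (by omega), this,
        Finset.prod_Icc_succ_top (by omega : 1 ≤ ml + 1)]
    ring
  · have : ml = mr + 1 := by omega
    rw [if_neg (by omega), if_pos (by omega), this,
        Finset.prod_Icc_succ_top (by omega : 1 ≤ mr + 1)]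
    ring
  · have : ml = mr := by omega
    rw [if_neg (by omega), if_neg (by omega), this]


end
end

section
/- Let R_{ij} (i<j) be raising operators acting on compositions. For a partition λ of length ℓ, the Hall-Littlewood polynomial defined via raising operators, Q_λ = ∏_{1≤i<j≤ℓ} (1−R_{ij})(1−tR_{ij})^{-1} q_λ, expands as Q_λ ∈ q_λ + ∑_{μ ⊳ λ} ℚ(t)·q_μ, where the sum is over partitions μ of |λ| strictly dominating λ; consequently {Q_λ : λ partition} is a ℚ(t)-basis of ℚ(t)[q_1, q_2, …]. -/
/- STATEMENT 9: Hall-Littlewood functions via raising operators.  In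
Λ_t = ℚ(t)[q₁,q₂,…] (= MvPolynomial ℕ (ℚ(t)), with q_{n+1} = X n, q₀ = 1 and
q_a = 0 for a < 0), define for an integer vector α of length ℓ
   Q_α = ∏_{1≤i<j≤ℓ} (1-R_{ij})(1-tR_{ij})⁻¹ q_α,
expanding each factor as 1 + (t-1)∑_{p≥1} t^{p-1} R_{ij}^p; the total expansion is
the (finitely supported) sum over exponent data p : pairs → ℕ of
∏ c(p_{ij}) · q_{α + ∑ p_{ij}(e_i - e_j)}, with c(0) = 1, c(p) = (t-1)t^{p-1}.
Then for every partition λ, Q_λ ∈ q_λ + ∑_{μ ⊳ λ} ℚ(t) q_μ (sum over partitions μ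
of |λ| strictly dominating λ), and consequently {Q_λ} over all partitions is a
ℚ(t)-basis of Λ_t. -/

noncomputable section

attribute [local instance] Classical.propDecidable

local notation "K" => RatFunc ℚ

noncomputable def tv : K := RatFunc.X

abbrev RQ : Type := MvPolynomial ℕ K

/-- q_a for a ∈ ℤ: q₀ = 1, q_a = 0 for a < 0, q_a = X (a-1) for a ≥ 1. -/
noncomputable def qz (a : ℤ) : RQ :=
  if a < 0 then 0 else if a = 0 then 1 else MvPolynomial.X (a.toNat - 1)

/-- the monomial q_β = q_{β_1} ⋯ q_{β_ℓ}. -/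
noncomputable def qmono (ℓ : ℕ) (β : Fin ℓ → ℤ) : RQ := ∏ k, qz (β k)

/-- coefficient of R^p in (1-R)(1-tR)⁻¹ = 1 + (t-1)∑_{p≥1} t^{p-1} R^p. -/
noncomputable def cR (p : ℕ) : K := if p = 0 then 1 else (tv - 1) * tv ^ (p - 1)

/-- Q_α = ∏_{i<j}(1-R_{ij})(1-tR_{ij})⁻¹ q_α, fully expanded. -/
noncomputable def Qv (ℓ : ℕ) (α : Fin ℓ → ℤ) : RQ :=
  ∑ᶠ p : Fin ℓ × Fin ℓ → ℕ,
    if ∀ ij : Fin ℓ × Fin ℓ, ¬ ij.1 < ij.2 → p ij = 0 then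
      (∏ ij : Fin ℓ × Fin ℓ, cR (p ij)) •
        qmono ℓ (fun k => α k + (∑ j, (p (k, j) : ℤ)) - ∑ i, (p (i, k) : ℤ))
    else 0

/-- a partition: antitone and eventually zero. -/
def IsPart (f : ℕ → ℕ) : Prop := Antitone f ∧ ∃ N, ∀ n, N ≤ n → f n = 0

/-- the length bound of an eventually-zero function. -/
noncomputable def plen (f : ℕ → ℕ) : ℕ := sInf {N | ∀ n, N ≤ n → f n = 0}

/-- Q_λ for a partition λ, using its length. -/
noncomputable def Qpart (f : ℕ → ℕ) : RQ := Qv (plen f) (fun k => (f (k : ℕ) : ℤ))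

/-- the monomial q_λ for a partition λ. -/
noncomputable def qmonoP (f : ℕ → ℕ) : RQ := ∏ᶠ i : ℕ, qz (f i)


/-! Expanding the product, `Q_λ` is a sum of multiples of `q_{λ + Σ p_{ij} (e_i - e_j)}` over
strictly upper triangular exponent matrices `p`.  Applying `R_{ij}^{p_{ij}}` with `i < j` raises
the partial sums `λ_1 + ⋯ + λ_m` with `i < m ≤ j` by `p_{ij}` and leaves all others unchanged, and
sorting a composition into decreasing order can only increase its partial sums.  As `q_β` only
depends on the multiset of entries of `β`, every term with `p ≠ 0` either vanishes or is a multiple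
of `q_μ` for a partition `μ` strictly dominating `λ`.  The `q_λ` are the monomial basis, and each
partition dominates and is dominated by only finitely many others, so a family that is
unitriangular with respect to dominance is again a basis. -/

open MvPolynomial Finset

theorem WellFounded.of_finite_setOf_rel {α : Type*} {r : α → α → Prop} [IsTrans α r] [Std.Irrefl r]
    (h : ∀ a, {b | r b a}.Finite) : WellFounded r := by
  refine Subrelation.wf (fun {b a} hba => ?_) (measure fun a => {b | r b a}.ncard).wf
  refine Set.ncard_lt_ncard ⟨fun c hcb => _root_.trans hcb hba, fun hsub => ?_⟩ (h a)
  exact Std.Irrefl.irrefl b (hsub hba)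

theorem eq_of_forall_sum_range_eq {M : Type*} [AddCommMonoid M] [IsLeftCancelAdd M] {f g : ℕ → M}
    (h : ∀ k, ∑ i ∈ range k, f i = ∑ i ∈ range k, g i) : f = g := by
  funext i
  have := h (i + 1)
  rwa [sum_range_succ, sum_range_succ, h i, add_right_inj] at this

@[to_additive]
theorem finprod_eq_prod_range_of_eq_one {M : Type*} [CommMonoid M] {u : ℕ → M} {N : ℕ}
    (hu : ∀ i, N ≤ i → u i = 1) : ∏ᶠ i, u i = ∏ i ∈ range N, u i := by
  refine finprod_eq_prod_of_mulSupport_subset u fun i hi => ?_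
  by_contra hiN
  exact hi (hu i (by simpa using hiN))

def finPrefix (ℓ m : ℕ) : Finset (Fin ℓ) := univ.filter fun k => (k : ℕ) < m

theorem mem_finPrefix {ℓ m : ℕ} {k : Fin ℓ} : k ∈ finPrefix ℓ m ↔ (k : ℕ) < m := by
  simp [finPrefix]

theorem sum_range_eq_sum_finPrefix {M : Type*} [AddCommMonoid M] {ℓ : ℕ} {u : ℕ → M}
    (hu : ∀ i, ℓ ≤ i → u i = 0) (m : ℕ) : ∑ i ∈ range m, u i = ∑ k ∈ finPrefix ℓ m, u k := by
  rw [finPrefix, sum_filter, Fin.sum_univ_eq_sum_range (fun i => if i < m then u i else 0),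
    ← sum_filter, ← sum_filter_of_ne (p := (· < ℓ)) fun i _ hi => not_le.mp (mt (hu i) hi)]
  congr 1
  ext i
  simp only [mem_filter, mem_range]
  exact and_comm

theorem sum_sub_sum_eq_sum_compl {ι G : Type*} [Fintype ι] [DecidableEq ι] [AddCommGroup G]
    (p : ι × ι → G) (S : Finset ι) :
    ∑ k ∈ S, (∑ j, p (k, j) - ∑ i, p (i, k)) =
      ∑ i ∈ S, ∑ j ∈ Sᶜ, p (i, j) - ∑ i ∈ Sᶜ, ∑ j ∈ S, p (i, j) := by
  have hout : ∀ k, ∑ j, p (k, j) = ∑ j ∈ S, p (k, j) + ∑ j ∈ Sᶜ, p (k, j) :=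
    fun k => (sum_add_sum_compl S _).symm
  have hin : ∀ k, ∑ i, p (i, k) = ∑ i ∈ S, p (i, k) + ∑ i ∈ Sᶜ, p (i, k) :=
    fun k => (sum_add_sum_compl S _).symm
  simp only [hout, hin, sum_sub_distrib, sum_add_distrib]
  rw [sum_comm (s := S) (t := S) (f := fun k i => p (i, k)),
    sum_comm (s := S) (t := Sᶜ) (f := fun k i => p (i, k))]
  abel

theorem MvPolynomial.prod_map_X_eq_monomial {σ R : Type*} [CommSemiring R] [DecidableEq σ]
    (s : Multiset σ) : (s.map X).prod = monomial (Multiset.toFinsupp s) (1 : R) := by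
  induction s using Multiset.induction with
  | empty => simp
  | cons a s ih =>
    rw [Multiset.map_cons, Multiset.prod_cons, ih, X, monomial_mul, one_mul,
      ← Multiset.singleton_add, Multiset.toFinsupp_add, Multiset.toFinsupp_singleton]

theorem Submodule.finsum_sub_mem {ι R M : Type*} [Semiring R] [AddCommGroup M] [Module R M]
    {N : Submodule R M} {u : ι → M} (hu : (Function.support u).Finite) (i₀ : ι)
    (h : ∀ i, i ≠ i₀ → u i ∈ N) : ∑ᶠ i, u i - u i₀ ∈ N := by
  rw [finsum_eq_sum_of_support_subset u (s := insert i₀ hu.toFinset) (by simp [Set.subset_insert]),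
    ← add_sum_erase _ _ (mem_insert_self _ _), add_sub_cancel_left]
  exact sum_mem fun i hi => h i (ne_of_mem_erase hi)

theorem exists_eq_add_finsum_smul_of_sub_mem_span {ι R M : Type*} [Semiring R] [AddCommGroup M]
    [Module R M] {v : ι → M} {s : Set ι} {x y : M} (h : x - y ∈ Submodule.span R (v '' s)) :
    ∃ c : ι → R, (∀ i, i ∉ s → c i = 0) ∧ x = y + ∑ᶠ i, c i • v i := by
  obtain ⟨l, hls, hl⟩ := (Finsupp.mem_span_image_iff_linearCombination R).mp h
  refine ⟨l, fun i hi => Finsupp.notMem_support_iff.mp fun h => hi (hls h), ?_⟩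
  have hsum : ∑ i ∈ l.support, l i • v i = x - y := by
    rw [← hl, Finsupp.linearCombination_apply]
    rfl
  rw [finsum_eq_sum_of_support_subset (s := l.support) (fun i => l i • v i) fun i hi =>
    Finsupp.mem_support_iff.mpr (Function.support_smul_subset_left (fun i => l i) v hi), hsum,
    add_sub_cancel]

namespace Module.Basis

variable {ι R M : Type*} [Ring R] [AddCommGroup M] [Module R M] (b : Basis ι R M) {v : ι → M}
  {r : ι → ι → Prop}

theorem repr_apply_of_sub_mem_span {i j : ι} (hr : ¬ r j i)
    (hv : v j - b j ∈ Submodule.span R (b '' {k | r j k})) :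
    b.repr (v j) i = Finsupp.single j 1 i := by
  have := Finsupp.notMem_support_iff.mp fun hi => hr (b.mem_span_image.mp hv hi)
  rwa [map_sub, Finsupp.sub_apply, repr_self, sub_eq_zero] at this

theorem linearIndependent_of_sub_mem_span (hr : WellFounded r)
    (hv : ∀ i, v i - b i ∈ Submodule.span R (b '' {j | r i j})) : LinearIndependent R v := by
  rw [linearIndependent_iff]
  intro l hl
  ext i
  induction i using hr.induction with
  | _ i ih =>
  have hcoord := congrArg (fun x => b.repr x i) hl
  simp only [Finsupp.linearCombination_apply, Finsupp.sum, map_sum, map_smul,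
    Finsupp.coe_finsetSum, Finset.sum_apply, Finsupp.smul_apply, smul_eq_mul, map_zero,
    Finsupp.coe_zero, Pi.zero_apply] at hcoord
  rwa [Finset.sum_eq_single i, b.repr_apply_of_sub_mem_span (hr.irrefl.irrefl i) (hv i),
    Finsupp.single_eq_same, mul_one] at hcoord
  · intro j _ hji
    by_cases hrji : r j i
    · rw [ih j hrji, Finsupp.coe_zero, Pi.zero_apply, zero_mul]
    · rw [b.repr_apply_of_sub_mem_span hrji (hv j), Finsupp.single_eq_of_ne hji.symm, mul_zero]
  · intro hi
    rw [Finsupp.notMem_support_iff.mp hi, zero_mul]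

theorem span_eq_top_of_sub_mem_span (hr : WellFounded (flip r))
    (hv : ∀ i, v i - b i ∈ Submodule.span R (b '' {j | r i j})) :
    Submodule.span R (Set.range v) = ⊤ := by
  have hb : ∀ i, b i ∈ Submodule.span R (Set.range v) := by
    intro i
    induction i using hr.induction with
    | _ i ih =>
    rw [← sub_sub_cancel (v i) (b i)]
    refine Submodule.sub_mem _ (Submodule.subset_span ⟨i, rfl⟩) ?_
    refine Submodule.span_le.mpr ?_ (hv i)
    rintro _ ⟨j, hj, rfl⟩
    exact ih j hj
  rw [eq_top_iff, ← b.span_eq, Submodule.span_le]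
  rintro _ ⟨i, rfl⟩
  exact hb i

end Module.Basis

namespace IsPart

variable {f : ℕ → ℕ} (hf : IsPart f)
include hf

theorem eq_zero_of_plen_le {i : ℕ} (hi : plen f ≤ i) : f i = 0 :=
  Nat.sInf_mem hf.2 i hi

theorem pos_of_lt_plen {i : ℕ} (hi : i < plen f) : 0 < f i := by
  refine Nat.pos_of_ne_zero fun hfi => hi.not_ge (Nat.sInf_le fun n hn => ?_)
  exact Nat.eq_zero_of_le_zero (hfi ▸ hf.1 hn)

theorem plen_le_finsum : plen f ≤ ∑ᶠ i, f i := by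
  rw [finsum_eq_sum_range_of_eq_zero fun _ => hf.eq_zero_of_plen_le]
  simpa using card_nsmul_le_sum (range (plen f)) f 1 fun i hi => hf.pos_of_lt_plen (mem_range.mp hi)

theorem le_finsum (i : ℕ) : f i ≤ ∑ᶠ j, f j :=
  single_le_finsum i ((range (plen f)).finite_toSet.subset fun _ hj =>
    mem_range.mpr (not_le.mp fun h => hj (hf.eq_zero_of_plen_le h))) fun _ => Nat.zero_le _

end IsPart

theorem setOf_isPart_finsum_eq_finite (n : ℕ) :
    {g : ℕ → ℕ | IsPart g ∧ ∑ᶠ i, g i = n}.Finite := by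
  refine Set.Finite.of_finite_image (f := fun g (i : Fin n) => g i) ?_ fun g hg g' hg' hgg' => ?_
  · refine (Set.Finite.pi (t := fun _ : Fin n => Set.Iic n) fun _ => Set.finite_Iic n).subset ?_
    rintro _ ⟨g, hg, rfl⟩ i -
    exact hg.2 ▸ hg.1.le_finsum i
  · funext i
    by_cases hi : i < n
    · exact congrFun hgg' ⟨i, hi⟩
    · rw [hg.1.eq_zero_of_plen_le ((hg.2 ▸ hg.1.plen_le_finsum).trans (not_lt.mp hi)),
        hg'.1.eq_zero_of_plen_le ((hg'.2 ▸ hg'.1.plen_le_finsum).trans (not_lt.mp hi))]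

def StrictlyDominates (g f : ℕ → ℕ) : Prop :=
  (∑ᶠ i, g i) = (∑ᶠ i, f i) ∧ (∀ k, ∑ i ∈ range k, f i ≤ ∑ i ∈ range k, g i) ∧ g ≠ f

theorem StrictlyDominates.irrefl (f : ℕ → ℕ) : ¬ StrictlyDominates f f := fun h => h.2.2 rfl

theorem StrictlyDominates.trans {f g h : ℕ → ℕ} (hgf : StrictlyDominates g f)
    (hhg : StrictlyDominates h g) : StrictlyDominates h f := by
  refine ⟨hhg.1.trans hgf.1, fun k => (hgf.2.1 k).trans (hhg.2.1 k), ?_⟩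
  rintro rfl
  exact hhg.2.2 (eq_of_forall_sum_range_eq fun k => le_antisymm (hgf.2.1 k) (hhg.2.1 k))

theorem finite_setOf_finsum_eq (n : ℕ) : {g : {f : ℕ → ℕ // IsPart f} | ∑ᶠ i, g.1 i = n}.Finite :=
  ((setOf_isPart_finsum_eq_finite n).preimage Subtype.val_injective.injOn).subset
    fun g hg => ⟨g.2, hg⟩

theorem wellFounded_strictlyDominated :
    WellFounded fun g f : {f : ℕ → ℕ // IsPart f} => StrictlyDominates f.1 g.1 :=
  @WellFounded.of_finite_setOf_rel _ _ ⟨fun _ _ _ h₁ h₂ => h₁.trans h₂⟩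
    ⟨fun f => StrictlyDominates.irrefl f.1⟩
    fun _ => (finite_setOf_finsum_eq _).subset fun _ hg => hg.1.symm

theorem wellFounded_strictlyDominates :
    WellFounded fun g f : {f : ℕ → ℕ // IsPart f} => StrictlyDominates g.1 f.1 :=
  @WellFounded.of_finite_setOf_rel _ _ ⟨fun _ _ _ h₁ h₂ => h₂.trans h₁⟩
    ⟨fun f => StrictlyDominates.irrefl f.1⟩
    fun _ => (finite_setOf_finsum_eq _).subset fun _ hg => hg.1

theorem qz_of_neg {a : ℤ} (ha : a < 0) : qz a = 0 := if_pos ha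

theorem qz_zero : qz 0 = 1 := by simp [qz]

theorem qz_natCast_of_pos {a : ℕ} (ha : 0 < a) : qz a = X (a - 1) := by
  simp [qz, ha.ne']

theorem nonneg_of_qmono_ne_zero {ℓ : ℕ} {β : Fin ℓ → ℤ} (h : qmono ℓ β ≠ 0) (k : Fin ℓ) :
    0 ≤ β k :=
  not_lt.mp fun hk => h (prod_eq_zero (mem_univ k) (qz_of_neg hk))

theorem qmonoP_eq_prod_range {f : ℕ → ℕ} {N : ℕ} (hf : ∀ i, N ≤ i → f i = 0) :
    qmonoP f = ∏ i ∈ range N, qz (f i) :=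
  finprod_eq_prod_range_of_eq_one fun i hi => by rw [hf i hi, Nat.cast_zero, qz_zero]

section Sorting

variable {ℓ : ℕ} (β : Fin ℓ → ℕ)

def sortDesc (i : ℕ) : ℕ := if h : i < ℓ then β (Tuple.sort β (Fin.rev ⟨i, h⟩)) else 0

theorem sortDesc_of_le {i : ℕ} (hi : ℓ ≤ i) : sortDesc β i = 0 := dif_neg hi.not_gt

theorem sortDesc_fin (k : Fin ℓ) : sortDesc β k = β (Tuple.sort β k.rev) :=
  dif_pos k.2

theorem antitone_sortDesc_fin : Antitone fun k : Fin ℓ => sortDesc β k := fun a b hab => by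
  simp only [sortDesc_fin]
  exact Tuple.monotone_sort β (Fin.rev_le_rev.mpr hab)

theorem isPart_sortDesc : IsPart (sortDesc β) := by
  refine ⟨fun a b hab => ?_, ℓ, fun _ => sortDesc_of_le β⟩
  by_cases hb : b < ℓ
  · exact antitone_sortDesc_fin β (show (⟨a, hab.trans_lt hb⟩ : Fin ℓ) ≤ ⟨b, hb⟩ from hab)
  · rw [sortDesc_of_le β (not_lt.mp hb)]
    exact Nat.zero_le _

theorem qmonoP_sortDesc : qmonoP (sortDesc β) = ∏ k, qz (β k) := by
  rw [qmonoP_eq_prod_range fun _ => sortDesc_of_le β, ← Fin.prod_univ_eq_prod_range]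
  simp only [sortDesc_fin]
  exact Equiv.prod_comp (Fin.revPerm.trans (Tuple.sort β)) fun k => qz (β k)

theorem finsum_sortDesc : ∑ᶠ i, sortDesc β i = ∑ k, β k := by
  rw [finsum_eq_sum_range_of_eq_zero fun _ => sortDesc_of_le β, ← Fin.sum_univ_eq_sum_range]
  simp only [sortDesc_fin]
  exact Equiv.sum_comp (Fin.revPerm.trans (Tuple.sort β)) β

theorem sum_finPrefix_le_sum_range_sortDesc (m : ℕ) :
    ∑ k ∈ finPrefix ℓ m, β k ≤ ∑ i ∈ range m, sortDesc β i := by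
  set π : Equiv.Perm (Fin ℓ) := Fin.revPerm.trans (Tuple.sort β)
  have hmono : Monovary (fun k : Fin ℓ => if (k : ℕ) < m then 1 else 0) (β ∘ π) := by
    intro i j hij
    have hji : j < i := not_le.mp fun h => hij.not_ge <| by
      simpa [π, sortDesc_fin] using antitone_sortDesc_fin β h
    simp only
    split_ifs <;> omega
  have := hmono.sum_mul_comp_perm_le_sum_mul (σ := π.symm)
  rw [sum_range_eq_sum_finPrefix (fun _ => sortDesc_of_le β), finPrefix, sum_filter, sum_filter]
  simpa [π, sortDesc_fin, ite_mul] using this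

end Sorting

def partExponent (f : ℕ → ℕ) : ℕ →₀ ℕ :=
  Multiset.toFinsupp ((Multiset.range (plen f)).map fun i => f i - 1)

namespace IsPart

variable {f : ℕ → ℕ} (hf : IsPart f)
include hf

theorem qmonoP_eq_monomial : qmonoP f = monomial (partExponent f) 1 := by
  rw [partExponent, ← prod_map_X_eq_monomial, Multiset.map_map,
    qmonoP_eq_prod_range fun _ => hf.eq_zero_of_plen_le, prod_eq_multiset_prod, range_val]
  refine congrArg _ (Multiset.map_congr rfl fun i hi => ?_)
  exact qz_natCast_of_pos (hf.pos_of_lt_plen (Multiset.mem_range.mp hi))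

theorem map_succ_map_pred : ((Multiset.range (plen f)).map fun i => f i - 1).map (· + 1) =
    (Multiset.range (plen f)).map f := by
  rw [Multiset.map_map]
  exact Multiset.map_congr rfl fun i hi =>
    Nat.sub_add_cancel (hf.pos_of_lt_plen (Multiset.mem_range.mp hi))

theorem pairwise_map_range : ((List.range (plen f)).map f).Pairwise (· ≥ ·) :=
  List.pairwise_map.mpr (List.pairwise_lt_range.imp fun h => hf.1 h.le)

theorem getD_map_range (i : ℕ) : ((List.range (plen f)).map f).getD i 0 = f i := by
  by_cases hi : i < plen f
  · simp [hi]
  · rw [List.getD_eq_default _ _ (by simpa using hi), hf.eq_zero_of_plen_le (not_lt.mp hi)]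

end IsPart

theorem partExponent_injOn : Set.InjOn partExponent {f | IsPart f} := by
  intro f hf g hg hfg
  have hmap := congrArg (Multiset.map (· + 1)) (Multiset.toFinsupp.injective hfg)
  rw [hf.map_succ_map_pred, hg.map_succ_map_pred] at hmap
  have hl := List.Perm.eq_of_pairwise' hf.pairwise_map_range hg.pairwise_map_range
    (Multiset.coe_eq_coe.mp hmap)
  funext i
  rw [← hf.getD_map_range, hl, hg.getD_map_range]

theorem exists_isPart_partExponent_eq (d : ℕ →₀ ℕ) : ∃ f, IsPart f ∧ partExponent f = d := by
  set l := (Finsupp.toMultiset d).toList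
  set β : Fin l.length → ℕ := fun k => l[k.1] + 1
  refine ⟨sortDesc β, isPart_sortDesc β, monomial_left_injective (one_ne_zero (α := K)) ?_⟩
  calc monomial (partExponent (sortDesc β)) 1 = qmonoP (sortDesc β) :=
        (isPart_sortDesc β).qmonoP_eq_monomial.symm
    _ = ∏ k : Fin l.length, X l[k.1] := by
      rw [qmonoP_sortDesc]
      exact prod_congr rfl fun k _ => by simpa [β] using qz_natCast_of_pos (Nat.succ_pos l[k.1])
    _ = monomial d 1 := by
      rw [Fin.prod_univ_fun_getElem, ← Multiset.prod_coe, ← Multiset.map_coe, Multiset.coe_toList,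
        prod_map_X_eq_monomial, Finsupp.toMultiset_toFinsupp]

def partExponentEquiv : {f : ℕ → ℕ // IsPart f} ≃ (ℕ →₀ ℕ) :=
  Equiv.ofBijective (fun f => partExponent f.1)
    ⟨fun f g h => Subtype.ext (partExponent_injOn f.2 g.2 h),
      fun d => let ⟨f, hf, hfd⟩ := exists_isPart_partExponent_eq d; ⟨⟨f, hf⟩, hfd⟩⟩

def qBasis : Module.Basis {f : ℕ → ℕ // IsPart f} K RQ :=
  (basisMonomials ℕ K).reindex partExponentEquiv.symm

theorem qBasis_apply (f : {f : ℕ → ℕ // IsPart f}) : qBasis f = qmonoP f.1 := by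
  rw [f.2.qmonoP_eq_monomial, qBasis, Module.Basis.reindex_apply, Equiv.symm_symm,
    coe_basisMonomials]
  rfl

section Raising

variable {ℓ : ℕ}

abbrev IsStrictlyUpper (p : Fin ℓ × Fin ℓ → ℕ) : Prop :=
  ∀ ij : Fin ℓ × Fin ℓ, ¬ ij.1 < ij.2 → p ij = 0

/-- The index `α + ∑ p_{ij} (e_i - e_j)` of `∏ R_{ij}^{p_{ij}} q_α`. -/
def raise (α : Fin ℓ → ℤ) (p : Fin ℓ × Fin ℓ → ℕ) (k : Fin ℓ) : ℤ :=
  α k + (∑ j, (p (k, j) : ℤ)) - ∑ i, (p (i, k) : ℤ)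

def crossSum (p : Fin ℓ × Fin ℓ → ℕ) (m : ℕ) : ℕ :=
  ∑ i ∈ finPrefix ℓ m, ∑ j ∈ (finPrefix ℓ m)ᶜ, p (i, j)

theorem Qv_eq_finsum (α : Fin ℓ → ℤ) : Qv ℓ α =
    ∑ᶠ p, if IsStrictlyUpper p then (∏ ij, cR (p ij)) • qmono ℓ (raise α p) else 0 := rfl

variable (α : Fin ℓ → ℤ) {p : Fin ℓ × Fin ℓ → ℕ}

theorem sum_raise (p : Fin ℓ × Fin ℓ → ℕ) : ∑ k, raise α p k = ∑ k, α k := by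
  simp only [raise, sum_sub_distrib, sum_add_distrib]
  rw [sum_comm (f := fun k i => (p (i, k) : ℤ))]
  abel

theorem sum_finPrefix_raise (hp : IsStrictlyUpper p) (m : ℕ) :
    ∑ k ∈ finPrefix ℓ m, raise α p k = ∑ k ∈ finPrefix ℓ m, α k + crossSum p m := by
  have hflow := sum_sub_sum_eq_sum_compl (fun ij => (p ij : ℤ)) (finPrefix ℓ m)
  have hback : ∑ i ∈ (finPrefix ℓ m)ᶜ, ∑ j ∈ finPrefix ℓ m, (p (i, j) : ℤ) = 0 := by
    refine sum_eq_zero fun i hi => sum_eq_zero fun j hj => ?_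
    rw [mem_compl, mem_finPrefix, not_lt] at hi
    rw [mem_finPrefix] at hj
    exact_mod_cast hp (i, j) fun hij => (Fin.lt_def.mp hij).not_ge (hj.le.trans hi)
  rw [hback, sub_zero] at hflow
  simp only [raise, add_sub_assoc, sum_add_distrib, hflow, crossSum]
  push_cast
  rfl

theorem le_crossSum {i j : Fin ℓ} (hij : i < j) : p (i, j) ≤ crossSum p j := by
  refine (single_le_sum (f := fun j' => p (i, j')) (fun _ _ => Nat.zero_le _) ?_).trans
    (single_le_sum (f := fun i' => ∑ j' ∈ _, p (i', j')) (fun _ _ => Nat.zero_le _) ?_)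
  · simp [mem_finPrefix]
  · simpa [mem_finPrefix] using hij

theorem eq_zero_of_crossSum_eq_zero (hp : IsStrictlyUpper p) (h : ∀ m, crossSum p m = 0) :
    p = 0 := by
  funext ij
  by_cases hij : ij.1 < ij.2
  · exact Nat.eq_zero_of_le_zero (h ij.2 ▸ le_crossSum hij)
  · exact hp ij hij

theorem apply_le_sum_of_raise_nonneg (hp : IsStrictlyUpper p) (hα : ∀ k, 0 ≤ α k)
    (hraise : ∀ k, 0 ≤ raise α p k) (ij : Fin ℓ × Fin ℓ) : (p ij : ℤ) ≤ ∑ k, α k := by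
  by_cases hij : ij.1 < ij.2
  · have hcross := sum_finPrefix_raise α hp ij.2
    have hα' : 0 ≤ ∑ k ∈ finPrefix ℓ ij.2, α k := sum_nonneg fun k _ => hα k
    have hsub := sum_le_sum_of_subset_of_nonneg (subset_univ (finPrefix ℓ ij.2))
      fun k _ _ => hraise k
    have hle : (p ij : ℤ) ≤ crossSum p ij.2 := by exact_mod_cast le_crossSum hij
    rw [sum_raise] at hsub
    linarith
  · rw [hp ij hij, Nat.cast_zero]
    exact sum_nonneg fun k _ => hα k

end Raising

section Triangularity

variable {ℓ : ℕ} {f : ℕ → ℕ}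

theorem qmono_raise_mem_span (hf : ∀ i, ℓ ≤ i → f i = 0) {p : Fin ℓ × Fin ℓ → ℕ}
    (hp : IsStrictlyUpper p) (hp0 : p ≠ 0) : qmono ℓ (raise (fun k => (f k : ℤ)) p) ∈
      Submodule.span K (qmonoP '' {g | IsPart g ∧ StrictlyDominates g f}) := by
  set α : Fin ℓ → ℤ := fun k => (f k : ℤ)
  by_cases hq : qmono ℓ (raise α p) = 0
  · rw [hq]
    exact Submodule.zero_mem _
  obtain ⟨β, hβ⟩ : ∃ β : Fin ℓ → ℕ, raise α p = fun k => (β k : ℤ) :=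
    ⟨fun k => (raise α p k).toNat,
      funext fun k => (Int.toNat_of_nonneg (nonneg_of_qmono_ne_zero hq k)).symm⟩
  have hprefix : ∀ m, ∑ i ∈ range m, (f i : ℤ) + crossSum p m ≤
      ∑ i ∈ range m, (sortDesc β i : ℤ) := by
    intro m
    have hsort := (Nat.cast_le (α := ℤ)).mpr (sum_finPrefix_le_sum_range_sortDesc β m)
    push_cast at hsort
    rwa [sum_range_eq_sum_finPrefix (u := fun i => (f i : ℤ)) (by simpa using hf),
      ← sum_finPrefix_raise α hp, hβ]
  have htotal : ∑ᶠ i, sortDesc β i = ∑ᶠ i, f i := by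
    have := sum_raise α p
    simp only [hβ, α] at this
    rw [finsum_sortDesc, finsum_eq_sum_range_of_eq_zero hf, ← Fin.sum_univ_eq_sum_range]
    exact_mod_cast this
  refine Submodule.subset_span
    ⟨sortDesc β, ⟨isPart_sortDesc β, htotal, fun m => ?_, fun hβf => ?_⟩, ?_⟩
  · exact_mod_cast (le_add_of_nonneg_right (Nat.cast_nonneg _)).trans (hprefix m)
  · refine hp0 (eq_zero_of_crossSum_eq_zero hp fun m => ?_)
    have := hprefix m
    rw [hβf] at this
    omega
  · rw [qmonoP_sortDesc, hβ]
    rfl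

theorem Qv_sub_qmonoP_mem_span (hf : ∀ i, ℓ ≤ i → f i = 0) :
    Qv ℓ (fun k => (f k : ℤ)) - qmonoP f ∈
      Submodule.span K (qmonoP '' {g | IsPart g ∧ StrictlyDominates g f}) := by
  set α : Fin ℓ → ℤ := fun k => (f k : ℤ)
  set term : (Fin ℓ × Fin ℓ → ℕ) → RQ :=
    fun p => if IsStrictlyUpper p then (∏ ij, cR (p ij)) • qmono ℓ (raise α p) else 0
  have hsupp : Function.support term ⊆
      ↑(Fintype.piFinset fun _ : Fin ℓ × Fin ℓ => range (∑ k : Fin ℓ, f k + 1)) := by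
    intro p hp
    by_cases hUp : IsStrictlyUpper p
    swap
    · exact absurd (if_neg hUp) hp
    have hq : qmono ℓ (raise α p) ≠ 0 := fun hq =>
      hp (by simp only [term, if_pos hUp, hq, smul_zero])
    rw [mem_coe, Fintype.mem_piFinset]
    intro ij
    have := apply_le_sum_of_raise_nonneg α hUp (fun k => Nat.cast_nonneg _)
      (nonneg_of_qmono_ne_zero hq) ij
    simp only [α] at this
    exact mem_range.mpr (Nat.lt_succ_of_le (by exact_mod_cast this))
  have hzero : term 0 = qmonoP f := by
    have hraise0 : raise α 0 = α := funext fun k => by simp [raise]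
    rw [show term 0 = (∏ _ij, cR 0) • qmono ℓ (raise α 0) from if_pos fun _ _ => rfl, hraise0,
      qmonoP_eq_prod_range hf, ← Fin.prod_univ_eq_prod_range]
    simp [cR, qmono, α]
  rw [Qv_eq_finsum, ← hzero]
  refine Submodule.finsum_sub_mem ((finite_toSet _).subset hsupp) 0 fun p hp0 => ?_
  by_cases hUp : IsStrictlyUpper p
  · simp only [term, if_pos hUp]
    exact Submodule.smul_mem _ _ (qmono_raise_mem_span hf hUp hp0)
  · simp only [term, if_neg hUp]
    exact Submodule.zero_mem _

end Triangularity

theorem Qpart_sub_qBasis_mem_span (f : {f : ℕ → ℕ // IsPart f}) :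
    Qpart f.1 - qBasis f ∈ Submodule.span K (qBasis '' {g | StrictlyDominates g.1 f.1}) := by
  have himage : qBasis '' {g | StrictlyDominates g.1 f.1} =
      qmonoP '' {g | IsPart g ∧ StrictlyDominates g f.1} := by
    ext x
    simp only [Set.mem_image, Set.mem_ofPred_eq, Subtype.exists, qBasis_apply]
    exact exists_congr fun _ => by tauto
  rw [qBasis_apply, himage]
  exact Qv_sub_qmonoP_mem_span fun _ => f.2.eq_zero_of_plen_le

theorem HL_triangular_and_basis :
    (∀ f : ℕ → ℕ, IsPart f →
      ∃ c : (ℕ → ℕ) → K, Qpart f = qmonoP f +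
        ∑ᶠ g : ℕ → ℕ,
          if IsPart g ∧ (∑ᶠ i, g i) = (∑ᶠ i, f i) ∧
              (∀ k, ∑ i ∈ Finset.range k, f i ≤ ∑ i ∈ Finset.range k, g i) ∧ g ≠ f then
            c g • qmonoP g
          else 0) ∧
    LinearIndependent K (fun p : {f : ℕ → ℕ // IsPart f} => Qpart p.1) ∧
    Submodule.span K (Set.range (fun p : {f : ℕ → ℕ // IsPart f} => Qpart p.1)) = ⊤ := by
  refine ⟨fun f hf => ?_,
    qBasis.linearIndependent_of_sub_mem_span wellFounded_strictlyDominated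
      Qpart_sub_qBasis_mem_span,
    qBasis.span_eq_top_of_sub_mem_span wellFounded_strictlyDominates Qpart_sub_qBasis_mem_span⟩
  obtain ⟨c, hc0, hc⟩ := exists_eq_add_finsum_smul_of_sub_mem_span
    (Qv_sub_qmonoP_mem_span (f := f) fun _ => hf.eq_zero_of_plen_le)
  refine ⟨c, hc.trans (congrArg _ (finsum_congr fun g => ?_))⟩
  split_ifs with hg
  · rfl
  · rw [hc0 g hg, zero_smul]

end
end

section
/- Recursive formula for double HL elements: for integer vectors α (of length ℓ−1), appended entry r, and β of length 𝔪, one has V_{(α,r),β} = ∑_{γ,η} t^{|γ|+|η|}(1−t^{-1})^{ℓ(γ)+ℓ(η)} V_{α+η, β−γ} · v^+_{r−|γ|−|η|}, summed over all compositions η ∈ ℕ^{ℓ−1} and γ ∈ ℕ^{𝔪} (the sum is finite since v^+_a = 0 for a < 0), where ℓ(γ) denotes the number of nonzero entries of γ. -/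
/- STATEMENT 13: Recursive formula for double Hall-Littlewood elements.  In
𝒟Λ_t = ℚ(t)[v₁⁺,v₂⁺,…,v₁⁻,v₂⁻,…] (= MvPolynomial (Bool × ℕ) (ℚ(t)) with
v⁺_{n+1} = X (true, n), v⁻_{n+1} = X (false, n), v₀^± = 1, v_a^± = 0 for a < 0),
with V_{α,β} = D_{ℓ,𝔪} v_{α,β} the fully expanded raising/lowering operator
expression, one has, for integer vectors α (length L), r ∈ ℤ, β (length M):
  V_{(α,r),β} = ∑_{γ∈ℕ^M, η∈ℕ^L} t^{|γ|+|η|} (1-t⁻¹)^{ℓ(γ)+ℓ(η)}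
                  V_{α+η, β-γ} · v⁺_{r-|γ|-|η|}. -/

noncomputable section

attribute [local instance] Classical.propDecidable

local notation "K" => RatFunc ℚ

abbrev RV : Type := MvPolynomial (Bool × ℕ) K

/-- v^±_a : v_0 = 1, v_a = 0 for a < 0, v_a = X(s, a-1) for a ≥ 1 (s = true: +). -/
noncomputable def vz (s : Bool) (a : ℤ) : RV :=
  if a < 0 then 0 else if a = 0 then 1 else MvPolynomial.X (s, a.toNat - 1)

/-- coefficient of the p-th power in 𝕃_{ij} and ℝ^±_{ij}:
1 + (1-t⁻¹)∑_{p≥1} t^p (operator)^p. -/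
noncomputable def cL (p : ℕ) : K := if p = 0 then 1 else (1 - tv⁻¹) * tv ^ p

/-- V_{α,β} = D_{ℓ,𝔪} (v_α⁺ v_β⁻), fully expanded:
S records the exponents of the lowering operators L_{ij}, P those of the raising
operators R⁺_{ij} (i<j), P' those of R⁻_{ij} (i<j). -/
noncomputable def Vv (ℓ m : ℕ) (a : Fin ℓ → ℤ) (b : Fin m → ℤ) : RV :=
  ∑ᶠ S : Fin ℓ × Fin m → ℕ, ∑ᶠ P : Fin ℓ × Fin ℓ → ℕ, ∑ᶠ P' : Fin m × Fin m → ℕ,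
    if (∀ ij : Fin ℓ × Fin ℓ, ¬ ij.1 < ij.2 → P ij = 0) ∧
        (∀ ij : Fin m × Fin m, ¬ ij.1 < ij.2 → P' ij = 0) then
      ((∏ ij : Fin ℓ × Fin m, cL (S ij)) * (∏ ij : Fin ℓ × Fin ℓ, cL (P ij)) *
          ∏ ij : Fin m × Fin m, cL (P' ij)) •
        ((∏ i, vz true (a i - (∑ j, (S (i, j) : ℤ))
              + (∑ k, (P (i, k) : ℤ)) - ∑ k, (P (k, i) : ℤ))) *
         ∏ j, vz false (b j - (∑ i, (S (i, j) : ℤ))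
              + (∑ k, (P' (j, k) : ℤ)) - ∑ k, (P' (k, j) : ℤ)))
    else 0

/-- The summand of `Vv`. -/
noncomputable def Tm (ℓ m : ℕ) (a : Fin ℓ → ℤ) (b : Fin m → ℤ)
    (S : Fin ℓ × Fin m → ℕ) (P : Fin ℓ × Fin ℓ → ℕ) (P' : Fin m × Fin m → ℕ) : RV :=
  if (∀ ij : Fin ℓ × Fin ℓ, ¬ ij.1 < ij.2 → P ij = 0) ∧
      (∀ ij : Fin m × Fin m, ¬ ij.1 < ij.2 → P' ij = 0) then
    ((∏ ij : Fin ℓ × Fin m, cL (S ij)) * (∏ ij : Fin ℓ × Fin ℓ, cL (P ij)) *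
        ∏ ij : Fin m × Fin m, cL (P' ij)) •
      ((∏ i, vz true (a i - (∑ j, (S (i, j) : ℤ))
            + (∑ k, (P (i, k) : ℤ)) - ∑ k, (P (k, i) : ℤ))) *
       ∏ j, vz false (b j - (∑ i, (S (i, j) : ℤ))
            + (∑ k, (P' (j, k) : ℤ)) - ∑ k, (P' (k, j) : ℤ)))
  else 0

lemma Vv_eq_finsum (ℓ m : ℕ) (a : Fin ℓ → ℤ) (b : Fin m → ℤ) :
    Vv ℓ m a b = ∑ᶠ S, ∑ᶠ P, ∑ᶠ P', Tm ℓ m a b S P P' := rfl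

lemma vz_of_neg {s : Bool} {x : ℤ} (h : x < 0) : vz s x = 0 := if_pos h

lemma vz_nonneg_of_ne {s : Bool} {x : ℤ} (h : vz s x ≠ 0) : 0 ≤ x := by
  by_contra h'
  exact h (vz_of_neg (by omega))

lemma entry_le_sum {p q : ℕ} (f : Fin p × Fin q → ℕ) (ij : Fin p × Fin q) :
    (f ij : ℤ) ≤ ∑ i, ∑ j, (f (i, j) : ℤ) := by
  obtain ⟨i, j⟩ := ij
  calc (f (i, j) : ℤ) ≤ ∑ j, (f (i, j) : ℤ) :=
        Finset.single_le_sum (fun k _ => Int.natCast_nonneg _) (Finset.mem_univ j)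
    _ ≤ ∑ i, ∑ j, (f (i, j) : ℤ) :=
        Finset.single_le_sum (fun k _ => Finset.sum_nonneg fun _ _ => Int.natCast_nonneg _)
          (Finset.mem_univ i)

lemma tri_bound {n : ℕ} (P : Fin n × Fin n → ℕ) (c : Fin n → ℤ)
    (htri : ∀ ij : Fin n × Fin n, ¬ ij.1 < ij.2 → P ij = 0)
    (h : ∀ i, 0 ≤ c i + (∑ k, (P (i, k) : ℤ)) - ∑ k, (P (k, i) : ℤ)) :
    ∀ ij : Fin n × Fin n, (P ij : ℤ) ≤ ∑ i, max (c i) 0 := by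
  have hmax : (0:ℤ) ≤ ∑ i, max (c i) 0 := Finset.sum_nonneg fun i _ => le_max_right _ _
  rintro ⟨i0, k0⟩
  by_cases hik : i0 < k0
  · set F : Finset (Fin n) := Finset.univ.filter (fun i => k0 ≤ i) with hF
    have hsum : 0 ≤ ∑ i ∈ F, (c i + (∑ k, (P (i, k) : ℤ)) - ∑ k, (P (k, i) : ℤ)) :=
      Finset.sum_nonneg fun i _ => h i
    have h1 : ∑ i ∈ F, (∑ k, (P (i, k) : ℤ)) = ∑ i ∈ F, ∑ k ∈ F, (P (i, k) : ℤ) := by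
      refine Finset.sum_congr rfl fun i hi => ?_
      rw [← Finset.sum_filter_add_sum_filter_not Finset.univ (fun k => k0 ≤ k)]
      have hz : ∑ k ∈ Finset.univ.filter (fun k => ¬ k0 ≤ k), (P (i, k) : ℤ) = 0 := by
        apply Finset.sum_eq_zero; intro k hk
        simp only [Finset.mem_filter, Finset.mem_univ, true_and] at hk
        simp only [hF, Finset.mem_filter, Finset.mem_univ, true_and] at hi
        have : P (i, k) = 0 := htri (i, k) (fun hlt => hk (hi.trans hlt.le))
        simp [this]
      rw [hz, add_zero]
    have h2 : ∑ i ∈ F, (∑ k, (P (k, i) : ℤ)) =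
        (∑ i ∈ F, ∑ k ∈ F, (P (k, i) : ℤ)) +
          ∑ i ∈ F, ∑ k ∈ Finset.univ.filter (fun k => ¬ k0 ≤ k), (P (k, i) : ℤ) := by
      rw [← Finset.sum_add_distrib]
      refine Finset.sum_congr rfl fun i hi => ?_
      rw [← Finset.sum_filter_add_sum_filter_not Finset.univ (fun k => k0 ≤ k)]
    have hcomm : ∑ i ∈ F, ∑ k ∈ F, (P (i, k) : ℤ) = ∑ i ∈ F, ∑ k ∈ F, (P (k, i) : ℤ) :=
      Finset.sum_comm
    have hR : (P (i0, k0) : ℤ) ≤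
        ∑ i ∈ F, ∑ k ∈ Finset.univ.filter (fun k => ¬ k0 ≤ k), (P (k, i) : ℤ) := by
      have hk0F : k0 ∈ F := by simp [hF]
      have hi0 : i0 ∈ Finset.univ.filter (fun k => ¬ k0 ≤ k) := by
        simp only [Finset.mem_filter, Finset.mem_univ, true_and, not_le]
        exact hik
      calc (P (i0, k0) : ℤ)
          ≤ ∑ k ∈ Finset.univ.filter (fun k => ¬ k0 ≤ k), (P (k, k0) : ℤ) :=
            Finset.single_le_sum (fun k _ => Int.natCast_nonneg _) hi0
        _ ≤ _ := Finset.single_le_sum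
            (fun i _ => Finset.sum_nonneg fun _ _ => Int.natCast_nonneg _) hk0F
    have hcF : ∑ i ∈ F, c i ≤ ∑ i, max (c i) 0 := by
      calc ∑ i ∈ F, c i ≤ ∑ i ∈ F, max (c i) 0 :=
            Finset.sum_le_sum fun i _ => le_max_left _ _
        _ ≤ ∑ i, max (c i) 0 :=
            Finset.sum_le_sum_of_subset_of_nonneg (Finset.subset_univ F)
              (fun i _ _ => le_max_right _ _)
    rw [Finset.sum_sub_distrib, Finset.sum_add_distrib, h1, h2] at hsum
    linarith
  · have : P (i0, k0) = 0 := htri (i0, k0) hik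
    simp [this, hmax]


/-- bound for entries of nonzero terms -/
noncomputable def Nb {ℓ m : ℕ} (a : Fin ℓ → ℤ) (b : Fin m → ℤ) : ℤ :=
  (∑ i, |a i|) + ∑ j, |b j|

lemma Tm_entry_bound {ℓ m : ℕ} {a : Fin ℓ → ℤ} {b : Fin m → ℤ}
    {S : Fin ℓ × Fin m → ℕ} {P : Fin ℓ × Fin ℓ → ℕ} {P' : Fin m × Fin m → ℕ}
    (h : Tm ℓ m a b S P P' ≠ 0) :
    (∀ ij, (S ij : ℤ) ≤ Nb a b) ∧ (∀ ij, (P ij : ℤ) ≤ Nb a b) ∧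
      (∀ ij, (P' ij : ℤ) ≤ Nb a b) := by
  have habs_a : ∑ i, a i ≤ ∑ i, |a i| := Finset.sum_le_sum fun i _ => le_abs_self _
  have habs_b : ∑ j, b j ≤ ∑ j, |b j| := Finset.sum_le_sum fun j _ => le_abs_self _
  have ha_nonneg : (0:ℤ) ≤ ∑ i, |a i| := Finset.sum_nonneg fun i _ => abs_nonneg _
  have hb_nonneg : (0:ℤ) ≤ ∑ j, |b j| := Finset.sum_nonneg fun j _ => abs_nonneg _
  by_cases hc : (∀ ij : Fin ℓ × Fin ℓ, ¬ ij.1 < ij.2 → P ij = 0) ∧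
      (∀ ij : Fin m × Fin m, ¬ ij.1 < ij.2 → P' ij = 0)
  · rw [Tm, if_pos hc] at h
    have hprod : ((∏ i, vz true (a i - (∑ j, (S (i, j) : ℤ))
            + (∑ k, (P (i, k) : ℤ)) - ∑ k, (P (k, i) : ℤ))) *
         ∏ j, vz false (b j - (∑ i, (S (i, j) : ℤ))
            + (∑ k, (P' (j, k) : ℤ)) - ∑ k, (P' (k, j) : ℤ))) ≠ 0 := by
      intro h0; rw [h0, smul_zero] at h; exact h rfl
    have hApr := (mul_ne_zero_iff.mp hprod).1
    have hBpr := (mul_ne_zero_iff.mp hprod).2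
    rw [Finset.prod_ne_zero_iff] at hApr hBpr
    have hA : ∀ i, 0 ≤ a i - (∑ j, (S (i, j) : ℤ))
        + (∑ k, (P (i, k) : ℤ)) - ∑ k, (P (k, i) : ℤ) :=
      fun i => vz_nonneg_of_ne (hApr i (Finset.mem_univ i))
    have hB : ∀ j, 0 ≤ b j - (∑ i, (S (i, j) : ℤ))
        + (∑ k, (P' (j, k) : ℤ)) - ∑ k, (P' (k, j) : ℤ) :=
      fun j => vz_nonneg_of_ne (hBpr j (Finset.mem_univ j))
    -- S bound
    have htelP : (∑ i, ∑ k, (P (i, k) : ℤ)) = ∑ i, ∑ k, (P (k, i) : ℤ) := Finset.sum_comm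
    have hSsum : ∑ i, ∑ j, (S (i, j) : ℤ) ≤ ∑ i, a i := by
      have h1 : (0:ℤ) ≤ ∑ i, (a i - (∑ j, (S (i, j) : ℤ))
          + (∑ k, (P (i, k) : ℤ)) - ∑ k, (P (k, i) : ℤ)) :=
        Finset.sum_nonneg fun i _ => hA i
      rw [Finset.sum_sub_distrib, Finset.sum_add_distrib, Finset.sum_sub_distrib] at h1
      linarith
    have hSbound : ∀ ij, (S ij : ℤ) ≤ Nb a b := by
      intro ij
      calc (S ij : ℤ) ≤ ∑ i, ∑ j, (S (i, j) : ℤ) := entry_le_sum S ij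
        _ ≤ ∑ i, a i := hSsum
        _ ≤ Nb a b := by unfold Nb; linarith
    refine ⟨hSbound, ?_, ?_⟩
    · intro ij
      have hb1 := tri_bound P (fun i => a i - ∑ j, (S (i, j) : ℤ)) hc.1 hA ij
      have hb2 : ∑ i, max (a i - ∑ j, (S (i, j) : ℤ)) 0 ≤ ∑ i, |a i| := by
        refine Finset.sum_le_sum fun i _ => ?_
        have hs : (0:ℤ) ≤ ∑ j, (S (i, j) : ℤ) :=
          Finset.sum_nonneg fun j _ => Int.natCast_nonneg _
        exact max_le ((by linarith : a i - ∑ j, (S (i, j) : ℤ) ≤ a i).trans (le_abs_self _))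
          (abs_nonneg _)
      unfold Nb; linarith
    · intro ij
      have hb1 := tri_bound P' (fun j => b j - ∑ i, (S (i, j) : ℤ)) hc.2 hB ij
      have hb2 : ∑ j, max (b j - ∑ i, (S (i, j) : ℤ)) 0 ≤ ∑ j, |b j| := by
        refine Finset.sum_le_sum fun j _ => ?_
        have hs : (0:ℤ) ≤ ∑ i, (S (i, j) : ℤ) :=
          Finset.sum_nonneg fun i _ => Int.natCast_nonneg _
        exact max_le ((by linarith : b j - ∑ i, (S (i, j) : ℤ) ≤ b j).trans (le_abs_self _))
          (abs_nonneg _)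
      unfold Nb; linarith
  · rw [Tm, if_neg hc] at h
    exact absurd rfl h

/-- box of matrices with entries ≤ B -/
noncomputable def pbox (p q B : ℕ) : Finset (Fin p × Fin q → ℕ) :=
  Fintype.piFinset (fun _ => Finset.range (B + 1))

/-- box of vectors with entries ≤ B -/
noncomputable def vbox (n B : ℕ) : Finset (Fin n → ℕ) :=
  Fintype.piFinset (fun _ => Finset.range (B + 1))

lemma mem_pbox {p q B : ℕ} {f : Fin p × Fin q → ℕ} : f ∈ pbox p q B ↔ ∀ ij, f ij ≤ B := by
  simp [pbox, Nat.lt_succ_iff]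

lemma mem_vbox {n B : ℕ} {f : Fin n → ℕ} : f ∈ vbox n B ↔ ∀ i, f i ≤ B := by
  simp [vbox, Nat.lt_succ_iff]

lemma Vv_eq_sum (ℓ m : ℕ) (a : Fin ℓ → ℤ) (b : Fin m → ℤ) (B : ℕ) (hB : Nb a b ≤ (B : ℤ)) :
    Vv ℓ m a b = ∑ S ∈ pbox ℓ m B, ∑ P ∈ pbox ℓ ℓ B, ∑ P' ∈ pbox m m B,
      Tm ℓ m a b S P P' := by
  have hS0 : ∀ {S : Fin ℓ × Fin m → ℕ}, S ∉ pbox ℓ m B →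
      ∀ P P', Tm ℓ m a b S P P' = 0 := by
    intro S hS P P'
    by_contra h0
    apply hS
    rw [mem_pbox]
    intro ij
    have := (Tm_entry_bound h0).1 ij
    have := hB
    omega
  have hP0 : ∀ {S : Fin ℓ × Fin m → ℕ} {P : Fin ℓ × Fin ℓ → ℕ}, P ∉ pbox ℓ ℓ B →
      ∀ P', Tm ℓ m a b S P P' = 0 := by
    intro S P hP P'
    by_contra h0
    apply hP
    rw [mem_pbox]
    intro ij
    have := (Tm_entry_bound h0).2.1 ij
    have := hB
    omega
  have hP'0 : ∀ {S : Fin ℓ × Fin m → ℕ} {P : Fin ℓ × Fin ℓ → ℕ} {P' : Fin m × Fin m → ℕ},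
      P' ∉ pbox m m B → Tm ℓ m a b S P P' = 0 := by
    intro S P P' hP'
    by_contra h0
    apply hP'
    rw [mem_pbox]
    intro ij
    have := (Tm_entry_bound h0).2.2 ij
    have := hB
    omega
  rw [Vv_eq_finsum]
  rw [finsum_eq_sum_of_support_subset _ (s := pbox ℓ m B) ?hs]
  case hs =>
    intro S hS
    simp only [Function.mem_support, ne_eq] at hS
    by_contra hmem
    apply hS
    have : ∀ P : Fin ℓ × Fin ℓ → ℕ, (∑ᶠ P' : Fin m × Fin m → ℕ, Tm ℓ m a b S P P') = 0 := by
      intro P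
      have : (fun P' : Fin m × Fin m → ℕ => Tm ℓ m a b S P P') = fun _ => 0 := by
        funext P'; exact hS0 hmem P P'
      rw [this, finsum_zero]
    calc ∑ᶠ P, ∑ᶠ P', Tm ℓ m a b S P P'
        = ∑ᶠ P : Fin ℓ × Fin ℓ → ℕ, (0 : RV) := by
          congr 1; funext P; exact this P
      _ = 0 := finsum_zero
  refine Finset.sum_congr rfl fun S hS => ?_
  rw [finsum_eq_sum_of_support_subset _ (s := pbox ℓ ℓ B) ?hp]
  case hp =>
    intro P hP
    simp only [Function.mem_support, ne_eq] at hP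
    by_contra hmem
    apply hP
    have : (fun P' : Fin m × Fin m → ℕ => Tm ℓ m a b S P P') = fun _ => 0 := by
      funext P'; exact hP0 hmem P'
    rw [this, finsum_zero]
  refine Finset.sum_congr rfl fun P hP => ?_
  rw [finsum_eq_sum_of_support_subset _ (s := pbox m m B)]
  intro P' hP'
  simp only [Function.mem_support, ne_eq] at hP'
  by_contra hmem
  exact hP' (hP'0 hmem)


/-- assemble an S-matrix for `ℓ = L+1` from its top block and last row. -/
noncomputable def asmS {L M : ℕ} (S₀ : Fin L × Fin M → ℕ) (γ : Fin M → ℕ) :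
    Fin (L + 1) × Fin M → ℕ :=
  fun x => Fin.lastCases (γ x.2) (fun i => S₀ (i, x.2)) x.1

@[simp] lemma asmS_cast {L M : ℕ} (S₀ : Fin L × Fin M → ℕ) (γ : Fin M → ℕ)
    (i : Fin L) (j : Fin M) : asmS S₀ γ (i.castSucc, j) = S₀ (i, j) := by
  simp [asmS]

@[simp] lemma asmS_last {L M : ℕ} (S₀ : Fin L × Fin M → ℕ) (γ : Fin M → ℕ)
    (j : Fin M) : asmS S₀ γ (Fin.last L, j) = γ j := by
  simp [asmS]

/-- assemble a P-matrix for `ℓ = L+1` from its top-left block, last column, last row. -/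
noncomputable def asmP {L : ℕ} (P₀ : Fin L × Fin L → ℕ) (η : Fin L → ℕ)
    (J : Fin (L + 1) → ℕ) : Fin (L + 1) × Fin (L + 1) → ℕ :=
  fun x => Fin.lastCases (J x.2)
    (fun i => Fin.lastCases (η i) (fun k => P₀ (i, k)) x.2) x.1

@[simp] lemma asmP_cast_cast {L : ℕ} (P₀ : Fin L × Fin L → ℕ) (η : Fin L → ℕ)
    (J : Fin (L + 1) → ℕ) (i k : Fin L) :
    asmP P₀ η J (i.castSucc, k.castSucc) = P₀ (i, k) := by simp [asmP]

@[simp] lemma asmP_cast_last {L : ℕ} (P₀ : Fin L × Fin L → ℕ) (η : Fin L → ℕ)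
    (J : Fin (L + 1) → ℕ) (i : Fin L) :
    asmP P₀ η J (i.castSucc, Fin.last L) = η i := by simp [asmP]

@[simp] lemma asmP_last {L : ℕ} (P₀ : Fin L × Fin L → ℕ) (η : Fin L → ℕ)
    (J : Fin (L + 1) → ℕ) (k : Fin (L + 1)) :
    asmP P₀ η J (Fin.last L, k) = J k := by simp [asmP]

lemma sum_split_S {L M B : ℕ} (f : (Fin (L + 1) × Fin M → ℕ) → RV) :
    ∑ S ∈ pbox (L + 1) M B, f S =
      ∑ γ ∈ vbox M B, ∑ S₀ ∈ pbox L M B, f (asmS S₀ γ) := by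
  rw [← Finset.sum_product']
  refine Finset.sum_nbij' (fun S => (fun j => S (Fin.last L, j), fun x => S (x.1.castSucc, x.2)))
    (fun p => asmS p.2 p.1) ?_ ?_ ?_ ?_ ?_
  · intro S hS
    rw [mem_pbox] at hS
    rw [Finset.mem_product]
    exact ⟨mem_vbox.mpr fun j => hS _, mem_pbox.mpr fun ij => hS _⟩
  · intro p hp
    rw [Finset.mem_product] at hp
    have h1 := mem_vbox.mp hp.1
    have h2 := mem_pbox.mp hp.2
    rw [mem_pbox]
    rintro ⟨x, j⟩
    induction x using Fin.lastCases with
    | last => simpa using h1 j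
    | cast i => simpa using h2 (i, j)
  · intro S hS
    funext ⟨x, j⟩
    induction x using Fin.lastCases with
    | last => simp
    | cast i => simp
  · intro p hp
    simp
  · intro S hS
    congr 1
    funext ⟨x, j⟩
    induction x using Fin.lastCases with
    | last => simp
    | cast i => simp

lemma sum_split_P {L B : ℕ} (f : (Fin (L + 1) × Fin (L + 1) → ℕ) → RV) :
    ∑ P ∈ pbox (L + 1) (L + 1) B, f P =
      ∑ η ∈ vbox L B, ∑ J ∈ vbox (L + 1) B, ∑ P₀ ∈ pbox L L B, f (asmP P₀ η J) := by
  rw [← Finset.sum_product', ← Finset.sum_product']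
  refine Finset.sum_nbij'
    (fun P => ((fun i => P (i.castSucc, Fin.last L), fun k => P (Fin.last L, k)),
      fun x => P (x.1.castSucc, x.2.castSucc)))
    (fun p => asmP p.2 p.1.1 p.1.2) ?_ ?_ ?_ ?_ ?_
  · intro P hP
    rw [mem_pbox] at hP
    simp only [Finset.mem_product]
    exact ⟨⟨mem_vbox.mpr fun i => hP _, mem_vbox.mpr fun k => hP _⟩,
      mem_pbox.mpr fun ij => hP _⟩
  · intro p hp
    simp only [Finset.mem_product] at hp
    have h1 := mem_vbox.mp hp.1.1
    have h2 := mem_vbox.mp hp.1.2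
    have h3 := mem_pbox.mp hp.2
    rw [mem_pbox]
    rintro ⟨x, y⟩
    induction x using Fin.lastCases with
    | last => simpa using h2 y
    | cast i =>
      induction y using Fin.lastCases with
      | last => simpa using h1 i
      | cast k => simpa using h3 (i, k)
  · intro P hP
    funext ⟨x, y⟩
    induction x using Fin.lastCases with
    | last => simp
    | cast i =>
      induction y using Fin.lastCases with
      | last => simp
      | cast k => simp
  · intro p hp
    rcases p with ⟨⟨η, J⟩, P₀⟩
    simp
  · intro P hP
    congr 1
    funext ⟨x, y⟩
    induction x using Fin.lastCases with
    | last => simp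
    | cast i =>
      induction y using Fin.lastCases with
      | last => simp
      | cast k => simp

lemma cL_vec {n : ℕ} (g : Fin n → ℕ) :
    ∏ j, cL (g j) =
      tv ^ (∑ j, g j) * (1 - tv⁻¹) ^ (Finset.univ.filter (fun j => g j ≠ 0)).card := by
  rw [Finset.card_filter, ← Finset.prod_pow_eq_pow_sum, ← Finset.prod_pow_eq_pow_sum,
    ← Finset.prod_mul_distrib]
  refine Finset.prod_congr rfl fun j _ => ?_
  by_cases h : g j = 0
  · simp [cL, h]
  · rw [cL, if_neg h, if_pos h]
    ring

lemma Tm_snoc {L M : ℕ} (α : Fin L → ℤ) (r : ℤ) (β : Fin M → ℤ)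
    (S₀ : Fin L × Fin M → ℕ) (γ : Fin M → ℕ) (P₀ : Fin L × Fin L → ℕ) (η : Fin L → ℕ)
    (P' : Fin M × Fin M → ℕ) :
    Tm (L + 1) M (Fin.snoc α r) β (asmS S₀ γ) (asmP P₀ η 0) P' =
      (tv ^ ((∑ i, γ i) + ∑ i, η i) *
          (1 - tv⁻¹) ^ ((Finset.univ.filter (fun i => γ i ≠ 0)).card +
            (Finset.univ.filter (fun i => η i ≠ 0)).card)) •
        (Tm L M (fun i => α i + η i) (fun j => β j - γ j) S₀ P₀ P' *
          vz true (r - ((∑ i, γ i : ℕ) : ℤ) - ((∑ i, η i : ℕ) : ℤ))) := by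
  have hcond : (∀ ij : Fin (L+1) × Fin (L+1), ¬ ij.1 < ij.2 → asmP P₀ η 0 ij = 0) ↔
      (∀ ij : Fin L × Fin L, ¬ ij.1 < ij.2 → P₀ ij = 0) := by
    constructor
    · intro h ij hij
      have := h (ij.1.castSucc, ij.2.castSucc) (by
        simpa [Fin.castSucc_lt_castSucc_iff] using hij)
      simpa using this
    · rintro h ⟨x, y⟩ hxy
      induction x using Fin.lastCases with
      | last => simp
      | cast i =>
        induction y using Fin.lastCases with
        | last => exact absurd (Fin.castSucc_lt_last i) hxy
        | cast k =>
          simp only [asmP_cast_cast]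
          exact h (i, k) (by simpa [Fin.castSucc_lt_castSucc_iff] using hxy)
  by_cases hc : (∀ ij : Fin L × Fin L, ¬ ij.1 < ij.2 → P₀ ij = 0) ∧
      (∀ ij : Fin M × Fin M, ¬ ij.1 < ij.2 → P' ij = 0)
  · rw [Tm, Tm, if_pos ⟨hcond.mpr hc.1, hc.2⟩, if_pos hc]
    have eCS : (∏ ij : Fin (L+1) × Fin M, cL (asmS S₀ γ ij)) =
        (∏ ij : Fin L × Fin M, cL (S₀ ij)) * ∏ j, cL (γ j) := by
      rw [Fintype.prod_prod_type, Fin.prod_univ_castSucc,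
        Fintype.prod_prod_type (f := fun ij : Fin L × Fin M => cL (S₀ ij))]
      simp
    have eCP : (∏ ij : Fin (L+1) × Fin (L+1), cL (asmP P₀ η 0 ij)) =
        (∏ ij : Fin L × Fin L, cL (P₀ ij)) * ∏ i, cL (η i) := by
      rw [Fintype.prod_prod_type, Fin.prod_univ_castSucc]
      have hlast : ∏ y : Fin (L+1), cL (asmP P₀ η 0 (Fin.last L, y)) = 1 := by
        simp [cL]
      rw [hlast, mul_one]
      have hrow : ∀ i : Fin L, ∏ y : Fin (L+1), cL (asmP P₀ η 0 (i.castSucc, y)) =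
          (∏ k : Fin L, cL (P₀ (i, k))) * cL (η i) := by
        intro i; rw [Fin.prod_univ_castSucc]; simp
      rw [Finset.prod_congr rfl (fun i _ => hrow i), Finset.prod_mul_distrib,
        Fintype.prod_prod_type (f := fun ij : Fin L × Fin L => cL (P₀ ij))]
    have eA : (∏ i : Fin (L+1), vz true ((Fin.snoc α r : Fin (L+1) → ℤ) i - (∑ j, (asmS S₀ γ (i, j) : ℤ))
          + (∑ k, (asmP P₀ η 0 (i, k) : ℤ)) - ∑ k, (asmP P₀ η 0 (k, i) : ℤ))) =
        (∏ i : Fin L, vz true ((fun i => α i + η i) i - (∑ j, (S₀ (i, j) : ℤ))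
            + (∑ k, (P₀ (i, k) : ℤ)) - ∑ k, (P₀ (k, i) : ℤ))) *
          vz true (r - ((∑ i, γ i : ℕ) : ℤ) - ((∑ i, η i : ℕ) : ℤ)) := by
      rw [Fin.prod_univ_castSucc]
      congr 1
      · refine Finset.prod_congr rfl fun i _ => ?_
        congr 1
        have e1 : ∑ j, (asmS S₀ γ (i.castSucc, j) : ℤ) = ∑ j, (S₀ (i, j) : ℤ) := by simp
        have e2 : ∑ k : Fin (L+1), (asmP P₀ η 0 (i.castSucc, k) : ℤ) =
            (∑ k : Fin L, (P₀ (i, k) : ℤ)) + η i := by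
          rw [Fin.sum_univ_castSucc]; simp
        have e3 : ∑ k : Fin (L+1), (asmP P₀ η 0 (k, i.castSucc) : ℤ) =
            ∑ k : Fin L, (P₀ (k, i) : ℤ) := by
          rw [Fin.sum_univ_castSucc]; simp
        rw [Fin.snoc_castSucc, e1, e2, e3]; ring
      · congr 1
        have e1 : ∑ j, (asmS S₀ γ (Fin.last L, j) : ℤ) = ((∑ j, γ j : ℕ) : ℤ) := by
          push_cast; simp
        have e2 : ∑ k : Fin (L+1), (asmP P₀ η 0 (Fin.last L, k) : ℤ) = 0 := by simp
        have e3 : ∑ k : Fin (L+1), (asmP P₀ η 0 (k, Fin.last L) : ℤ) =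
            ((∑ i, η i : ℕ) : ℤ) := by
          rw [Fin.sum_univ_castSucc]; push_cast; simp
        rw [Fin.snoc_last, e1, e2, e3]; ring
    have eB : (∏ j : Fin M, vz false (β j - (∑ i : Fin (L+1), (asmS S₀ γ (i, j) : ℤ))
          + (∑ k, (P' (j, k) : ℤ)) - ∑ k, (P' (k, j) : ℤ))) =
        ∏ j : Fin M, vz false ((fun j => β j - γ j) j - (∑ i : Fin L, (S₀ (i, j) : ℤ))
          + (∑ k, (P' (j, k) : ℤ)) - ∑ k, (P' (k, j) : ℤ)) := by
      refine Finset.prod_congr rfl fun j _ => ?_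
      congr 1
      rw [Fin.sum_univ_castSucc]
      simp only [asmS_cast, asmS_last]
      ring
    rw [eCS, eCP, eA, eB, cL_vec γ, cL_vec η]
    simp only [MvPolynomial.smul_eq_C_mul, map_mul, map_pow]
    ring
  · rw [Tm, Tm, if_neg (fun hh => hc ⟨hcond.mp hh.1, hh.2⟩), if_neg hc]
    simp

theorem double_HL_recursion (L M : ℕ) (α : Fin L → ℤ) (r : ℤ) (β : Fin M → ℤ) :
    Vv (L + 1) M (Fin.snoc α r) β =
      ∑ᶠ η : Fin L → ℕ, ∑ᶠ γ : Fin M → ℕ,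
        (tv ^ ((∑ i, γ i) + ∑ i, η i) *
            (1 - tv⁻¹) ^ ((Finset.univ.filter (fun i => γ i ≠ 0)).card +
              (Finset.univ.filter (fun i => η i ≠ 0)).card)) •
          (Vv L M (fun i => α i + η i) (fun j => β j - γ j) *
            vz true (r - ((∑ i, γ i : ℕ) : ℤ) - ((∑ i, η i : ℕ) : ℤ))) := by
  set B1 : ℕ := (∑ i, (α i).natAbs) + r.natAbs + (∑ j, (β j).natAbs) with hB1def
  have hcastα : ((∑ i, (α i).natAbs : ℕ) : ℤ) = ∑ i, |α i| := by
    push_cast [Int.natCast_natAbs]; rfl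
  have hcastβ : ((∑ j, (β j).natAbs : ℕ) : ℤ) = ∑ j, |β j| := by
    push_cast [Int.natCast_natAbs]; rfl
  have hB1cast : (B1 : ℤ) = (∑ i, |α i|) + |r| + ∑ j, |β j| := by
    rw [hB1def]; push_cast [Int.natCast_natAbs]; rfl
  have hNb_top : Nb (Fin.snoc α r : Fin (L+1) → ℤ) β ≤ (B1 : ℤ) := by
    have : (∑ i : Fin (L+1), |(Fin.snoc α r : Fin (L+1) → ℤ) i|) = (∑ i, |α i|) + |r| := by
      rw [Fin.sum_univ_castSucc]; simp
    rw [Nb, this, hB1cast]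
  -- the common summand
  set X : (Fin M → ℕ) → (Fin L → ℕ) → RV := fun γ η =>
    (tv ^ ((∑ i, γ i) + ∑ i, η i) *
        (1 - tv⁻¹) ^ ((Finset.univ.filter (fun i => γ i ≠ 0)).card +
          (Finset.univ.filter (fun i => η i ≠ 0)).card)) •
      (Vv L M (fun i => α i + η i) (fun j => β j - γ j) *
        vz true (r - ((∑ i, γ i : ℕ) : ℤ) - ((∑ i, η i : ℕ) : ℤ))) with hX
  -- inner folding lemma
  have inner_eq : ∀ (γ : Fin M → ℕ) (η : Fin L → ℕ),
      (∑ S₀ ∈ pbox L M B1, ∑ P₀ ∈ pbox L L B1, ∑ P' ∈ pbox M M B1,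
        (tv ^ ((∑ i, γ i) + ∑ i, η i) *
            (1 - tv⁻¹) ^ ((Finset.univ.filter (fun i => γ i ≠ 0)).card +
              (Finset.univ.filter (fun i => η i ≠ 0)).card)) •
          (Tm L M (fun i => α i + η i) (fun j => β j - γ j) S₀ P₀ P' *
            vz true (r - ((∑ i, γ i : ℕ) : ℤ) - ((∑ i, η i : ℕ) : ℤ)))) = X γ η := by
    intro γ η
    rcases lt_or_ge (r - ((∑ i, γ i : ℕ) : ℤ) - ((∑ i, η i : ℕ) : ℤ)) 0 with hneg | hge
    · have hv : vz true (r - ((∑ i, γ i : ℕ) : ℤ) - ((∑ i, η i : ℕ) : ℤ)) = 0 :=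
        vz_of_neg hneg
      simp only [hX, hv, mul_zero, smul_zero, Finset.sum_const_zero]
    · have hNb' : Nb (fun i => α i + η i) (fun j => β j - γ j) ≤ (B1 : ℤ) := by
        have h1 : ∑ i, |α i + (η i : ℤ)| ≤ (∑ i, |α i|) + ((∑ i, η i : ℕ) : ℤ) := by
          rw [Nat.cast_sum, ← Finset.sum_add_distrib]
          refine Finset.sum_le_sum fun i _ => ?_
          calc |α i + (η i : ℤ)| ≤ |α i| + |(η i : ℤ)| := abs_add_le _ _
            _ = |α i| + (η i : ℤ) := by rw [abs_of_nonneg (Int.natCast_nonneg _)]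
        have h2 : ∑ j, |β j - (γ j : ℤ)| ≤ (∑ j, |β j|) + ((∑ j, γ j : ℕ) : ℤ) := by
          rw [Nat.cast_sum, ← Finset.sum_add_distrib]
          refine Finset.sum_le_sum fun j _ => ?_
          calc |β j - (γ j : ℤ)| ≤ |β j| + |(γ j : ℤ)| := abs_sub _ _
            _ = |β j| + (γ j : ℤ) := by rw [abs_of_nonneg (Int.natCast_nonneg _)]
        have h3 : r ≤ |r| := le_abs_self r
        rw [Nb, hB1cast]
        linarith
      simp only [hX]
      rw [Vv_eq_sum L M _ _ B1 hNb']
      rw [Finset.sum_mul, Finset.smul_sum]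
      refine Finset.sum_congr rfl fun S₀ _ => ?_
      rw [Finset.sum_mul, Finset.smul_sum]
      refine Finset.sum_congr rfl fun P₀ _ => ?_
      rw [Finset.sum_mul, Finset.smul_sum]
  -- splitting the P-sum and removing the junk row
  have step1 : ∀ (γ : Fin M → ℕ) (S₀ : Fin L × Fin M → ℕ),
      (∑ P ∈ pbox (L+1) (L+1) B1, ∑ P' ∈ pbox M M B1,
        Tm (L+1) M (Fin.snoc α r) β (asmS S₀ γ) P P') =
      ∑ η ∈ vbox L B1, ∑ P₀ ∈ pbox L L B1, ∑ P' ∈ pbox M M B1,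
        (tv ^ ((∑ i, γ i) + ∑ i, η i) *
            (1 - tv⁻¹) ^ ((Finset.univ.filter (fun i => γ i ≠ 0)).card +
              (Finset.univ.filter (fun i => η i ≠ 0)).card)) •
          (Tm L M (fun i => α i + η i) (fun j => β j - γ j) S₀ P₀ P' *
            vz true (r - ((∑ i, γ i : ℕ) : ℤ) - ((∑ i, η i : ℕ) : ℤ))) := by
    intro γ S₀
    rw [sum_split_P (f := fun P => ∑ P' ∈ pbox M M B1,
      Tm (L+1) M (Fin.snoc α r) β (asmS S₀ γ) P P')]
    refine Finset.sum_congr rfl fun η hη => ?_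
    rw [Finset.sum_eq_single_of_mem (0 : Fin (L+1) → ℕ)
      (mem_vbox.mpr fun _ => Nat.zero_le _) ?_]
    · refine Finset.sum_congr rfl fun P₀ _ => Finset.sum_congr rfl fun P' _ => ?_
      exact Tm_snoc α r β S₀ γ P₀ η P'
    · intro J hJ hJ0
      apply Finset.sum_eq_zero; intro P₀ _
      apply Finset.sum_eq_zero; intro P' _
      rw [Tm, if_neg]
      rintro ⟨h1, _⟩
      apply hJ0
      funext k
      have := h1 (Fin.last L, k) ((Fin.le_last k).not_gt)
      simpa using this
  have main1 : ∀ γ : Fin M → ℕ,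
      (∑ S₀ ∈ pbox L M B1, ∑ P ∈ pbox (L+1) (L+1) B1, ∑ P' ∈ pbox M M B1,
        Tm (L+1) M (Fin.snoc α r) β (asmS S₀ γ) P P') =
      ∑ η ∈ vbox L B1, X γ η := by
    intro γ
    calc (∑ S₀ ∈ pbox L M B1, ∑ P ∈ pbox (L+1) (L+1) B1, ∑ P' ∈ pbox M M B1,
          Tm (L+1) M (Fin.snoc α r) β (asmS S₀ γ) P P')
        = ∑ S₀ ∈ pbox L M B1, ∑ η ∈ vbox L B1, ∑ P₀ ∈ pbox L L B1, ∑ P' ∈ pbox M M B1,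
            (tv ^ ((∑ i, γ i) + ∑ i, η i) *
                (1 - tv⁻¹) ^ ((Finset.univ.filter (fun i => γ i ≠ 0)).card +
                  (Finset.univ.filter (fun i => η i ≠ 0)).card)) •
              (Tm L M (fun i => α i + η i) (fun j => β j - γ j) S₀ P₀ P' *
                vz true (r - ((∑ i, γ i : ℕ) : ℤ) - ((∑ i, η i : ℕ) : ℤ))) :=
          Finset.sum_congr rfl fun S₀ _ => step1 γ S₀
      _ = ∑ η ∈ vbox L B1, ∑ S₀ ∈ pbox L M B1, ∑ P₀ ∈ pbox L L B1, ∑ P' ∈ pbox M M B1,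
            (tv ^ ((∑ i, γ i) + ∑ i, η i) *
                (1 - tv⁻¹) ^ ((Finset.univ.filter (fun i => γ i ≠ 0)).card +
                  (Finset.univ.filter (fun i => η i ≠ 0)).card)) •
              (Tm L M (fun i => α i + η i) (fun j => β j - γ j) S₀ P₀ P' *
                vz true (r - ((∑ i, γ i : ℕ) : ℤ) - ((∑ i, η i : ℕ) : ℤ))) :=
          Finset.sum_comm
      _ = ∑ η ∈ vbox L B1, X γ η := Finset.sum_congr rfl fun η _ => inner_eq γ η
  -- convert the RHS finsums to finite sums
  have hr_le : r ≤ (B1 : ℤ) := by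
    rw [hB1cast]
    have h3 : r ≤ |r| := le_abs_self r
    have := Finset.sum_nonneg (fun i (_ : i ∈ (Finset.univ : Finset (Fin L))) => abs_nonneg (α i))
    have := Finset.sum_nonneg (fun j (_ : j ∈ (Finset.univ : Finset (Fin M))) => abs_nonneg (β j))
    linarith
  have hXzero_γ : ∀ (γ : Fin M → ℕ) (η : Fin L → ℕ), γ ∉ vbox M B1 → X γ η = 0 := by
    intro γ η hγ
    rw [mem_vbox] at hγ
    push_neg at hγ
    obtain ⟨j, hj⟩ := hγ
    have h1 : γ j ≤ ∑ i, γ i := Finset.single_le_sum (fun i _ => Nat.zero_le _) (Finset.mem_univ j)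
    have hneg : r - ((∑ i, γ i : ℕ) : ℤ) - ((∑ i, η i : ℕ) : ℤ) < 0 := by
      have h2 : (B1 : ℤ) < ((∑ i, γ i : ℕ) : ℤ) := by exact_mod_cast lt_of_lt_of_le hj h1
      have h4 : (0 : ℤ) ≤ ((∑ i, η i : ℕ) : ℤ) := Int.natCast_nonneg _
      linarith
    have hv : vz true (r - ((∑ i, γ i : ℕ) : ℤ) - ((∑ i, η i : ℕ) : ℤ)) = 0 :=
      vz_of_neg hneg
    simp only [hX, hv, mul_zero, smul_zero]
  have hXzero_η : ∀ (γ : Fin M → ℕ) (η : Fin L → ℕ), η ∉ vbox L B1 → X γ η = 0 := by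
    intro γ η hη
    rw [mem_vbox] at hη
    push_neg at hη
    obtain ⟨i, hi⟩ := hη
    have h1 : η i ≤ ∑ i, η i := Finset.single_le_sum (fun i _ => Nat.zero_le _) (Finset.mem_univ i)
    have hneg : r - ((∑ i, γ i : ℕ) : ℤ) - ((∑ i, η i : ℕ) : ℤ) < 0 := by
      have h2 : (B1 : ℤ) < ((∑ i, η i : ℕ) : ℤ) := by exact_mod_cast lt_of_lt_of_le hi h1
      have h4 : (0 : ℤ) ≤ ((∑ i, γ i : ℕ) : ℤ) := Int.natCast_nonneg _
      linarith
    have hv : vz true (r - ((∑ i, γ i : ℕ) : ℤ) - ((∑ i, η i : ℕ) : ℤ)) = 0 :=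
      vz_of_neg hneg
    simp only [hX, hv, mul_zero, smul_zero]
  have hRHS : (∑ᶠ η : Fin L → ℕ, ∑ᶠ γ : Fin M → ℕ, X γ η) =
      ∑ η ∈ vbox L B1, ∑ γ ∈ vbox M B1, X γ η := by
    rw [finsum_eq_sum_of_support_subset _ (s := vbox L B1) ?hs]
    case hs =>
      intro η hη
      simp only [Function.mem_support, ne_eq] at hη
      by_contra hmem
      apply hη
      have : (fun γ : Fin M → ℕ => X γ η) = fun _ => 0 := by
        funext γ; exact hXzero_η γ η hmem
      rw [this, finsum_zero]
    refine Finset.sum_congr rfl fun η _ => ?_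
    rw [finsum_eq_sum_of_support_subset _ (s := vbox M B1)]
    intro γ hγ
    simp only [Function.mem_support, ne_eq] at hγ
    by_contra hmem
    exact hγ (hXzero_γ γ η hmem)
  rw [Vv_eq_sum (L+1) M (Fin.snoc α r) β B1 hNb_top, sum_split_S]
  exact (Finset.sum_congr rfl fun γ _ => main1 γ).trans (Finset.sum_comm.trans hRHS.symm)
end
end

section
/- Riedtmann-Peng formula: for finite modules M, N, L over a finitary ring (e.g. finite-length 𝔽_q[x]-modules supported at x), the number F^L_{MN} of submodules X ⊆ L with X ≅ N and L/X ≅ M satisfies F^L_{MN} = (|Ext^1(M,N)_L| / |Hom(M,N)|) · (|Aut L| / (|Aut M|·|Aut N|)), where Ext^1(M,N)_L ⊆ Ext^1(M,N) is the subset of extension classes whose middle term is isomorphic to L. -/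
/- STATEMENT 17: Riedtmann-Peng formula.  For finite nilpotent 𝔽_q[x]-modules
M, N, L (finite length, annihilated by a power of x),
   F^L_{MN} = (|Ext¹(M,N)_L| / |Hom(M,N)|) · (|Aut L| / (|Aut M|·|Aut N|)),
where F^L_{MN} counts submodules X ⊆ L with X ≅ N and L/X ≅ M, and Ext¹(M,N)_L is
the set of Yoneda classes of extensions 0 → N → E → M → 0 with middle term E ≅ L,
realized as the set of exact pairs (f : N ↪ L, g : L ↠ M) modulo the equivalence
given by automorphisms of the middle term L. -/

open Polynomial

variable (A : Type*) [CommRing A]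
variable (M N L : Type*) [AddCommGroup M] [AddCommGroup N] [AddCommGroup L]
  [Module A M] [Module A N] [Module A L]

/-- Short exact sequences 0 → N → L → M → 0 with prescribed middle term L. -/
def SES : Type _ :=
  {fg : (N →ₗ[A] L) × (L →ₗ[A] M) //
    Function.Injective fg.1 ∧ Function.Surjective fg.2 ∧
      LinearMap.range fg.1 = LinearMap.ker fg.2}

/-- Yoneda equivalence of two such sequences: an automorphism of L compatible with
the identity maps on N and M. -/
def sesEquiv : SES A M N L → SES A M N L → Prop := fun x y =>
  ∃ φ : L ≃ₗ[A] L, (φ.toLinearMap ∘ₗ x.1.1 = y.1.1) ∧ (y.1.2 ∘ₗ φ.toLinearMap = x.1.2)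

/-- Ext¹(M,N)_L : extension classes of M by N with middle term isomorphic to L. -/
def ExtClasses : Type _ := Quot (sesEquiv A M N L)

/-! Count the exact pairs `N ↪ L ↠ M` in two ways. `Aut L` acts on them with the classes of
`Ext¹(M, N)_L` as orbits, and the stabilizer of `(f, g)` is `{1 + f ∘ h ∘ g | h ∈ Hom(M, N)}`, so by
orbit–stabilizer `|pairs| · |Hom(M, N)| = |Ext¹(M, N)_L| · |Aut L|`. On the other hand
`(f, g) ↦ im f` maps the pairs onto the submodules counted by `F^L_{MN}`, and each fibre is a torsor
under `Aut N × Aut M`. -/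

noncomputable section

open MulAction

theorem MulAction.card_mul_card_eq_of_stabilizer_equiv {G X H : Type*} [Group G]
    [MulAction G X] (e : ∀ x : X, stabilizer G x ≃ H) :
    Nat.card X * Nat.card H = Nat.card (orbitRel.Quotient G X) * Nat.card G := by
  rw [← Nat.card_prod, ← Nat.card_prod]
  refine Nat.card_congr ?_
  calc X × H ≃ (Σ ω : orbitRel.Quotient G X, orbit G ω.out) × H :=
        (selfEquivSigmaOrbits G X).prodCongr (Equiv.refl H)
    _ ≃ Σ ω : orbitRel.Quotient G X, orbit G ω.out × H := Equiv.sigmaProdDistrib _ _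
    _ ≃ Σ _ : orbitRel.Quotient G X, G := Equiv.sigmaCongrRight fun ω =>
        ((orbitEquivQuotientStabilizer G ω.out).prodCongr (e ω.out).symm).trans
          Subgroup.groupEquivQuotientProdSubgroup.symm
    _ ≃ orbitRel.Quotient G X × G := Equiv.sigmaEquivProd _ _

theorem Nat.card_eq_card_mul_of_fiber_equiv {α β γ : Type*} (f : α → β)
    (e : ∀ b, {a // f a = b} ≃ γ) : Nat.card α = Nat.card β * Nat.card γ := by
  rw [← Nat.card_prod]
  exact Nat.card_congr <| (Equiv.sigmaFiberEquiv f).symm.trans <|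
    (Equiv.sigmaCongrRight e).trans (Equiv.sigmaEquivProd β γ)

theorem LinearMap.exists_comp_eq_of_ker_le {R M N P : Type*} [Ring R] [AddCommGroup M]
    [AddCommGroup N] [AddCommGroup P] [Module R M] [Module R N] [Module R P]
    {g : M →ₗ[R] N} (hg : Function.Surjective g) {ψ : M →ₗ[R] P}
    (h : LinearMap.ker g ≤ LinearMap.ker ψ) : ∃ χ : N →ₗ[R] P, χ ∘ₗ g = ψ :=
  ⟨(LinearMap.ker g).liftQ ψ h ∘ₗ (g.quotKerEquivOfSurjective hg).symm.toLinearMap, by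
    ext m
    simp⟩

theorem LinearMap.exists_comp_comp_eq_of_range_eq_ker {R M N L : Type*} [Ring R]
    [AddCommGroup M] [AddCommGroup N] [AddCommGroup L] [Module R M] [Module R N] [Module R L]
    {f : N →ₗ[R] L} {g : L →ₗ[R] M} (hf : Function.Injective f) (hg : Function.Surjective g)
    (hfg : LinearMap.range f = LinearMap.ker g) {ψ : L →ₗ[R] L} (hψf : ψ ∘ₗ f = 0)
    (hgψ : g ∘ₗ ψ = 0) : ∃ h : M →ₗ[R] N, f ∘ₗ h ∘ₗ g = ψ := by
  obtain ⟨χ, rfl⟩ := exists_comp_eq_of_ker_le hg (hfg ▸ range_le_ker_iff.2 hψf)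
  have hχ : ∀ m, χ m ∈ Set.range f := by
    intro m
    obtain ⟨l, rfl⟩ := hg m
    exact mem_range.1 (hfg ▸ LinearMap.congr_fun hgψ l)
  exact ⟨χ.codLift f hf hχ, by rw [← comp_assoc, comp_codLift]⟩

def LinearEquiv.equivCongr {R M M' N N' : Type*} [Semiring R] [AddCommMonoid M]
    [AddCommMonoid M'] [AddCommMonoid N] [AddCommMonoid N'] [Module R M] [Module R M']
    [Module R N] [Module R N'] (e₁ : M ≃ₗ[R] M') (e₂ : N ≃ₗ[R] N') :
    (M ≃ₗ[R] N) ≃ (M' ≃ₗ[R] N') where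
  toFun t := e₁.symm.trans (t.trans e₂)
  invFun t := e₁.trans (t.trans e₂.symm)
  left_inv t := by ext; simp
  right_inv t := by ext; simp

variable {A M N L}

namespace SES

theorem apply_apply_eq_zero (s : SES A M N L) (n : N) : s.1.2 (s.1.1 n) = 0 := by
  rw [← LinearMap.mem_ker, ← s.2.2.2]
  exact LinearMap.mem_range_self s.1.1 n

instance : MulAction (L ≃ₗ[A] L) (SES A M N L) where
  smul φ s := ⟨(φ.toLinearMap ∘ₗ s.1.1, s.1.2 ∘ₗ φ.symm.toLinearMap),
    φ.injective.comp s.2.1, s.2.2.1.comp φ.symm.surjective, by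
      rw [LinearMap.range_comp, LinearMap.ker_comp, s.2.2.2,
        Submodule.map_equiv_eq_comap_symm]⟩
  one_smul _ := rfl
  mul_smul _ _ _ := rfl

theorem smul_eq_iff {φ : L ≃ₗ[A] L} {x y : SES A M N L} :
    φ • x = y ↔ φ.toLinearMap ∘ₗ x.1.1 = y.1.1 ∧ y.1.2 ∘ₗ φ.toLinearMap = x.1.2 := by
  refine Subtype.ext_iff.trans (Prod.ext_iff.trans (and_congr Iff.rfl ?_))
  exact (LinearEquiv.comp_toLinearMap_symm_eq _ _).trans eq_comm

def extClassesEquivOrbits :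
    ExtClasses A M N L ≃ orbitRel.Quotient (L ≃ₗ[A] L) (SES A M N L) :=
  Quot.congrRight fun x y => by
    rw [orbitRel_apply, mem_orbit_symm, mem_orbit_iff]
    exact exists_congr fun _ => smul_eq_iff.symm

def autOfHom (s : SES A M N L) (h : M →ₗ[A] N) : L ≃ₗ[A] L :=
  .ofLinearMap (.id + s.1.1 ∘ₗ h ∘ₗ s.1.2) (.id - s.1.1 ∘ₗ h ∘ₗ s.1.2)
    (by ext; simp [apply_apply_eq_zero]) (by ext; simp [apply_apply_eq_zero])

theorem autOfHom_apply (s : SES A M N L) (h : M →ₗ[A] N) (l : L) :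
    s.autOfHom h l = l + s.1.1 (h (s.1.2 l)) := rfl

theorem autOfHom_mem_stabilizer (s : SES A M N L) (h : M →ₗ[A] N) :
    s.autOfHom h ∈ stabilizer (L ≃ₗ[A] L) s := by
  refine smul_eq_iff.2 ⟨?_, ?_⟩ <;> ext <;> simp [autOfHom_apply, apply_apply_eq_zero]

theorem autOfHom_injective (s : SES A M N L) : Function.Injective s.autOfHom := by
  intro h h' eq
  have : s.1.1 ∘ₗ h ∘ₗ s.1.2 = s.1.1 ∘ₗ h' ∘ₗ s.1.2 :=
    add_left_cancel (congrArg LinearEquiv.toLinearMap eq)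
  rwa [LinearMap.cancel_left s.2.1, LinearMap.cancel_right s.2.2.1] at this

theorem autOfHom_surjective_stabilizer (s : SES A M N L) {φ : L ≃ₗ[A] L}
    (hφ : φ ∈ stabilizer (L ≃ₗ[A] L) s) : ∃ h, s.autOfHom h = φ := by
  obtain ⟨hf, hg⟩ := smul_eq_iff.1 hφ
  obtain ⟨h, hh⟩ := LinearMap.exists_comp_comp_eq_of_range_eq_ker s.2.1 s.2.2.1 s.2.2.2
    (ψ := φ.toLinearMap - .id)
    (by rw [LinearMap.sub_comp, hf, LinearMap.id_comp, sub_self])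
    (by rw [LinearMap.comp_sub, hg, LinearMap.comp_id, sub_self])
  refine ⟨h, LinearEquiv.ext fun l => ?_⟩
  have hl := LinearMap.congr_fun hh l
  simp only [LinearMap.comp_apply, LinearMap.sub_apply, LinearMap.id_apply,
    LinearEquiv.coe_coe] at hl
  rw [autOfHom_apply, hl, add_sub_cancel]

def stabilizerEquivHom (s : SES A M N L) :
    stabilizer (L ≃ₗ[A] L) s ≃ (M →ₗ[A] N) :=
  (Equiv.ofBijective (fun h => ⟨s.autOfHom h, s.autOfHom_mem_stabilizer h⟩)
    ⟨fun _ _ eq => s.autOfHom_injective (congrArg Subtype.val eq),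
      fun φ => (s.autOfHom_surjective_stabilizer φ.2).imp fun _ => Subtype.ext⟩).symm

theorem card_mul_card_hom :
    Nat.card (SES A M N L) * Nat.card (M →ₗ[A] N) =
      Nat.card (ExtClasses A M N L) * Nat.card (L ≃ₗ[A] L) := by
  rw [Nat.card_congr extClassesEquivOrbits]
  exact card_mul_card_eq_of_stabilizer_equiv stabilizerEquivHom

def toSubmodule (s : SES A M N L) :
    {X : Submodule A L // Nonempty (X ≃ₗ[A] N) ∧ Nonempty ((L ⧸ X) ≃ₗ[A] M)} :=
  ⟨LinearMap.range s.1.1, ⟨(LinearEquiv.ofInjective _ s.2.1).symm⟩,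
    ⟨(Submodule.quotEquivOfEq _ _ s.2.2.2).trans (s.1.2.quotKerEquivOfSurjective s.2.2.1)⟩⟩

def ofSubmodule (X : Submodule A L) (e : N ≃ₗ[A] X) (e' : (L ⧸ X) ≃ₗ[A] M) :
    SES A M N L :=
  ⟨(X.subtype ∘ₗ e.toLinearMap, e'.toLinearMap ∘ₗ X.mkQ),
    X.injective_subtype.comp e.injective, e'.surjective.comp X.mkQ_surjective, by
      rw [LinearMap.range_comp, LinearMap.ker_comp, LinearEquiv.range, Submodule.map_top,
        Submodule.range_subtype, LinearEquiv.ker, Submodule.comap_bot, Submodule.ker_mkQ]⟩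

theorem range_ofSubmodule (X : Submodule A L) (e : N ≃ₗ[A] X) (e' : (L ⧸ X) ≃ₗ[A] M) :
    LinearMap.range (ofSubmodule X e e').1.1 = X := by
  rw [ofSubmodule, LinearMap.range_comp, LinearEquiv.range, Submodule.map_top,
    Submodule.range_subtype]

def equivOfRangeEq (X : Submodule A L) :
    {s : SES A M N L // LinearMap.range s.1.1 = X} ≃ (N ≃ₗ[A] X) × ((L ⧸ X) ≃ₗ[A] M) where
  toFun s := ((LinearEquiv.ofInjective _ s.1.2.1).trans (LinearEquiv.ofEq _ _ s.2),
    (Submodule.quotEquivOfEq _ _ (s.2.symm.trans s.1.2.2.2)).trans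
      (s.1.1.2.quotKerEquivOfSurjective s.1.2.2.1))
  invFun e := ⟨ofSubmodule X e.1 e.2, range_ofSubmodule X e.1 e.2⟩
  left_inv _ := rfl
  right_inv _ := Prod.ext (LinearEquiv.ext fun _ => rfl)
    (LinearEquiv.toLinearMap_injective (by ext; rfl))

theorem card_eq_card_submodules_mul :
    Nat.card (SES A M N L) =
      Nat.card {X : Submodule A L // Nonempty (X ≃ₗ[A] N) ∧ Nonempty ((L ⧸ X) ≃ₗ[A] M)} *
        Nat.card ((N ≃ₗ[A] N) × (M ≃ₗ[A] M)) :=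
  Nat.card_eq_card_mul_of_fiber_equiv toSubmodule fun X =>
    ((Equiv.subtypeEquivRight fun _ => Subtype.ext_iff).trans (equivOfRangeEq X.1)).trans
      ((LinearEquiv.equivCongr (.refl A N) X.2.1.some).prodCongr
        (LinearEquiv.equivCongr X.2.2.some (.refl A M)))

end SES

theorem card_submodules_mul_card_hom_mul_card_aut :
    Nat.card {X : Submodule A L // Nonempty (X ≃ₗ[A] N) ∧ Nonempty ((L ⧸ X) ≃ₗ[A] M)} *
        (Nat.card (M →ₗ[A] N) * (Nat.card (M ≃ₗ[A] M) * Nat.card (N ≃ₗ[A] N))) =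
      Nat.card (ExtClasses A M N L) * Nat.card (L ≃ₗ[A] L) := by
  rw [← SES.card_mul_card_hom, SES.card_eq_card_submodules_mul, Nat.card_prod]
  ring

end

theorem riedtmann_peng_general (F : Type*) [Field F]
    (M N L : Type*) [AddCommGroup M] [AddCommGroup N] [AddCommGroup L]
    [Module (Polynomial F) M] [Module (Polynomial F) N] [Module (Polynomial F) L]
    [Finite M] [Finite N] :
    (Nat.card {X : Submodule (Polynomial F) L //
        Nonempty (X ≃ₗ[Polynomial F] N) ∧ Nonempty ((L ⧸ X) ≃ₗ[Polynomial F] M)} : ℚ)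
      = ((Nat.card (ExtClasses (Polynomial F) M N L) : ℚ)
            / (Nat.card (M →ₗ[Polynomial F] N) : ℚ)) *
        ((Nat.card (L ≃ₗ[Polynomial F] L) : ℚ)
            / ((Nat.card (M ≃ₗ[Polynomial F] M) : ℚ) * (Nat.card (N ≃ₗ[Polynomial F] N) : ℚ))) := by
  have : Finite (M →ₗ[F[X]] N) := .of_injective _ DFunLike.coe_injective
  have : Finite (M ≃ₗ[F[X]] M) := .of_injective _ DFunLike.coe_injective
  have : Finite (N ≃ₗ[F[X]] N) := .of_injective _ DFunLike.coe_injective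
  rw [div_mul_div_comm, eq_div_iff (by
    simp only [ne_eq, mul_eq_zero, Nat.cast_eq_zero, Nat.card_ne_zero, not_or]
    exact ⟨⟨inferInstance, ‹_›⟩, ⟨inferInstance, ‹_›⟩, inferInstance, ‹_›⟩)]
  norm_cast
  exact card_submodules_mul_card_hom_mul_card_aut

theorem riedtmann_peng (F : Type*) [Field F] [Fintype F]
    (M N L : Type*) [AddCommGroup M] [AddCommGroup N] [AddCommGroup L]
    [Module (Polynomial F) M] [Module (Polynomial F) N] [Module (Polynomial F) L]
    [Finite M] [Finite N] [Finite L]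
    (hM : ∃ k, ∀ x : M, (Polynomial.X : Polynomial F) ^ k • x = 0)
    (hN : ∃ k, ∀ x : N, (Polynomial.X : Polynomial F) ^ k • x = 0)
    (hL : ∃ k, ∀ x : L, (Polynomial.X : Polynomial F) ^ k • x = 0) :
    (Nat.card {X : Submodule (Polynomial F) L //
        Nonempty (X ≃ₗ[Polynomial F] N) ∧ Nonempty ((L ⧸ X) ≃ₗ[Polynomial F] M)} : ℚ)
      = ((Nat.card (ExtClasses (Polynomial F) M N L) : ℚ)
            / (Nat.card (M →ₗ[Polynomial F] N) : ℚ)) *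
        ((Nat.card (L ≃ₗ[Polynomial F] L) : ℚ)
            / ((Nat.card (M ≃ₗ[Polynomial F] M) : ℚ) * (Nat.card (N ≃ₗ[Polynomial F] N) : ℚ))) :=
  riedtmann_peng_general F M N L
end
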